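/- arXiv:math/0601629 — 10 statements merged into one kernel-verified Lean document; each statement's English description precedes it below -/
import Mathlib

section
/- Let N ≥ 1 and let π = (π₁, …, π_s) be a tuple of positive integers with π₁ + ⋯ + π_s = N. For such a tuple define 𝔤^π to be the set of all N×N complex matrices x for which there exist a chain of subspaces 0 = F₀ ⊆ F₁ ⊆ ⋯ ⊆ F_s = ℂ^N with dim_ℂ F_j − dim_ℂ F_{j−1} = π_j for all j, and scalars α₁, …, α_s ∈ ℂ such that x v − α_j v ∈ F_{j−1} for every v ∈ F_j and every j. Then for every permutation τ of {1, …, s}, the set 𝔤^{π∘τ} associated to the reordered tuple (π_{τ(1)}, …, π_{τ(s)}) is equal to 𝔤^π. -/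
open Matrix

/-- The set 𝔤^π of N×N complex matrices preserving some flag of type
π = (π₁, …, π_s) and acting as a scalar on each successive quotient. -/
def gSet (N s : ℕ) (π : Fin s → ℕ) : Set (Matrix (Fin N) (Fin N) ℂ) :=
  {x | ∃ F : Fin (s + 1) → Submodule ℂ (Fin N → ℂ),
    F 0 = ⊥ ∧ F (Fin.last s) = ⊤ ∧
    (∀ j : Fin s, F j.castSucc ≤ F j.succ) ∧
    (∀ j : Fin s, Module.finrank ℂ (F j.succ) =
      Module.finrank ℂ (F j.castSucc) + π j) ∧
    ∃ α : Fin s → ℂ, ∀ j : Fin s, ∀ v ∈ F j.succ,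
      x.mulVec v - α j • v ∈ F j.castSucc}


open Matrix Module Submodule

section Aux

variable {K : Type*} [Field K] {V : Type*} [AddCommGroup V] [Module K V]
  [FiniteDimensional K V]

/-- finrank of a submodule containing `A`, via the quotient by `A`. -/
lemma finrank_eq_map_mkQ_add {A D : Submodule K V} (h : A ≤ D) :
    finrank K D = finrank K (D.map A.mkQ) + finrank K A := by
  have hr := LinearMap.finrank_range_add_finrank_ker (A.mkQ.comp D.subtype)
  have h1 : LinearMap.range (A.mkQ.comp D.subtype) = D.map A.mkQ := by
    rw [LinearMap.range_comp, Submodule.range_subtype]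
  have h2 : LinearMap.ker (A.mkQ.comp D.subtype) = A.comap D.subtype := by
    rw [LinearMap.ker_comp, Submodule.ker_mkQ]
  have h3 : finrank K (A.comap D.subtype) = finrank K A :=
    (Submodule.comapSubtypeEquivOfLe h).finrank_eq
  rw [h1, h2, h3] at hr
  omega

lemma rank_ineq1 (f : V →ₗ[K] V) {A B C : Submodule K V} (hAB : A ≤ B)
    (hC : ∀ v ∈ C, f v ∈ B) :
    finrank K C + finrank K A ≤ finrank K (C ⊓ A.comap f : Submodule K V) + finrank K B := by
  set g := (A.mkQ ∘ₗ f) ∘ₗ C.subtype with hg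
  have hr := LinearMap.finrank_range_add_finrank_ker g
  have hker : LinearMap.ker g = (C ⊓ A.comap f).comap C.subtype := by
    ext v
    simp [hg, Submodule.Quotient.mk_eq_zero, Submodule.mem_comap, v.2]
  have hkr : finrank K (LinearMap.ker g) = finrank K (C ⊓ A.comap f : Submodule K V) := by
    rw [hker]; exact (Submodule.comapSubtypeEquivOfLe inf_le_left).finrank_eq
  have hrange : LinearMap.range g ≤ B.map A.mkQ := by
    rintro _ ⟨v, rfl⟩
    exact ⟨f v, hC v v.2, rfl⟩
  have hle : finrank K (LinearMap.range g) ≤ finrank K (B.map A.mkQ) :=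
    Submodule.finrank_mono hrange
  have hB := finrank_eq_map_mkQ_add hAB
  omega

lemma rank_ineq2 (f : V →ₗ[K] V) {A B C : Submodule K V} (hAB : A ≤ B) (hBC : B ≤ C)
    (hB : ∀ v ∈ B, f v ∈ A) :
    finrank K (A ⊔ C.map f : Submodule K V) + finrank K B ≤ finrank K C + finrank K A := by
  set g := (A.mkQ ∘ₗ f) ∘ₗ C.subtype with hg
  have hr := LinearMap.finrank_range_add_finrank_ker g
  have hkle : B.comap C.subtype ≤ LinearMap.ker g := by
    intro v hv
    simp only [hg, LinearMap.mem_ker, LinearMap.comp_apply, Submodule.subtype_apply,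
      Submodule.mkQ_apply, Submodule.Quotient.mk_eq_zero]
    exact hB v hv
  have hkB : finrank K B ≤ finrank K (LinearMap.ker g) := by
    have := (Submodule.comapSubtypeEquivOfLe hBC).finrank_eq
    rw [← this]
    exact Submodule.finrank_mono hkle
  have hrange : LinearMap.range g = (C.map f).map A.mkQ := by
    rw [hg, LinearMap.range_comp, Submodule.range_subtype, Submodule.map_comp]
  have hmap : (A ⊔ C.map f).map A.mkQ = (C.map f).map A.mkQ := by
    rw [Submodule.map_sup]
    have : A.map A.mkQ = ⊥ := by
      rw [eq_bot_iff]
      rintro _ ⟨a, ha, rfl⟩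
      simpa [Submodule.Quotient.mk_eq_zero] using ha
    rw [this, bot_sup_eq]
  have hfr : finrank K (A ⊔ C.map f : Submodule K V)
      = finrank K ((C.map f).map A.mkQ) + finrank K A := by
    rw [← hmap]; exact finrank_eq_map_mkQ_add le_sup_left
  rw [hrange] at hr
  omega

lemma exists_submodule_between {U W : Submodule K V} (hUW : U ≤ W) {r : ℕ}
    (h1 : finrank K U ≤ r) (h2 : r ≤ finrank K W) :
    ∃ X, U ≤ X ∧ X ≤ W ∧ finrank K X = r := by
  revert h2
  induction r, h1 using Nat.le_induction with
  | base => exact fun _ => ⟨U, le_rfl, hUW, rfl⟩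
  | succ r hr ih =>
    intro h2
    obtain ⟨X, hUX, hXW, hX⟩ := ih (by omega)
    have hne : X ≠ W := fun h => by rw [h] at hX; omega
    obtain ⟨v, hvW, hvX⟩ := SetLike.exists_of_lt (lt_of_le_of_ne hXW hne)
    have hv0 : v ≠ 0 := fun h => hvX (h ▸ X.zero_mem)
    have hinf : X ⊓ (K ∙ v) = ⊥ := by
      rw [eq_bot_iff]
      rintro w ⟨hwX, hwv⟩
      obtain ⟨c, rfl⟩ := Submodule.mem_span_singleton.1 hwv
      rcases eq_or_ne c 0 with rfl | hc
      · simp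
      · exact absurd (by simpa [smul_smul, inv_mul_cancel₀ hc] using X.smul_mem c⁻¹ hwX) hvX
    have hsum := Submodule.finrank_sup_add_finrank_inf_eq X (K ∙ v)
    rw [hinf, finrank_bot, finrank_span_singleton hv0] at hsum
    refine ⟨X ⊔ (K ∙ v), hUX.trans le_sup_left,
      sup_le hXW ((Submodule.span_singleton_le_iff_mem v W).2 hvW), by omega⟩

end Aux


open Matrix Module Submodule

section Core

variable {N : ℕ}

/-- Core step: swap two consecutive steps of a flag. -/
lemma core_swap (x : Matrix (Fin N) (Fin N) ℂ) {A B C : Submodule ℂ (Fin N → ℂ)}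
    {α β : ℂ} {p q : ℕ}
    (hAB : A ≤ B) (hBC : B ≤ C)
    (hpB : finrank ℂ B = finrank ℂ A + p) (hqC : finrank ℂ C = finrank ℂ B + q)
    (hB : ∀ v ∈ B, x.mulVec v - α • v ∈ A) (hC : ∀ v ∈ C, x.mulVec v - β • v ∈ B) :
    ∃ B', A ≤ B' ∧ B' ≤ C ∧ finrank ℂ B' = finrank ℂ A + q ∧
      (∀ v ∈ B', x.mulVec v - β • v ∈ A) ∧ (∀ v ∈ C, x.mulVec v - α • v ∈ B') := by
  set L := x.mulVecLin with hL
  have hLa : ∀ v, x.mulVec v = L v := fun v => by simp [hL, Matrix.mulVecLin_apply]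
  by_cases hab : α = β
  · subst hab
    set f := L - α • LinearMap.id with hf
    have hfa : ∀ v, f v = x.mulVec v - α • v := fun v => by
      simp [hf, hLa, LinearMap.sub_apply, LinearMap.smul_apply]
    have hfC : ∀ v ∈ C, f v ∈ B := fun v hv => by rw [hfa]; exact hC v hv
    have hfB : ∀ v ∈ B, f v ∈ A := fun v hv => by rw [hfa]; exact hB v hv
    have hImK : A ⊔ C.map f ≤ C ⊓ A.comap f := by
      refine sup_le (le_inf (hAB.trans hBC) fun a ha => hfB a (hAB ha)) ?_
      rintro _ ⟨v, hv, rfl⟩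
      exact ⟨hBC (hfC v hv), hfB _ (hfC v hv)⟩
    have i1 := rank_ineq1 f hAB hfC
    have i2 := rank_ineq2 f hAB hBC hfB
    obtain ⟨B', h1, h2, h3⟩ := exists_submodule_between hImK
      (r := finrank ℂ A + q) (by omega) (by omega)
    refine ⟨B', le_sup_left.trans h1, h2.trans inf_le_left, h3, ?_, ?_⟩
    · intro v hv
      rw [← hfa]
      exact (h2 hv).2
    · intro v hv
      rw [← hfa]
      exact h1 (Submodule.mem_sup_right ⟨v, hv, rfl⟩)
  · set f := L - β • LinearMap.id with hf
    have hfa : ∀ v, f v = x.mulVec v - β • v := fun v => by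
      simp [hf, hLa, LinearMap.sub_apply, LinearMap.smul_apply]
    have hfC : ∀ v ∈ C, f v ∈ B := fun v hv => by rw [hfa]; exact hC v hv
    refine ⟨C ⊓ A.comap f, ?_, inf_le_left, ?_, ?_, ?_⟩
    · -- A ≤ B'
      refine le_inf (hAB.trans hBC) fun a ha => ?_
      have h1 := hB a (hAB ha)
      have : f a = (x.mulVec a - α • a) + (α - β) • a := by
        rw [hfa]; module
      rw [Submodule.mem_comap, this]
      exact A.add_mem h1 (A.smul_mem _ ha)
    · -- rank
      have i1 := rank_ineq1 f hAB hfC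
      have hinter : (C ⊓ A.comap f) ⊓ B ≤ A := by
        rintro v ⟨⟨hvC, hvf⟩, hvB⟩
        have h1 : x.mulVec v - α • v ∈ A := hB v hvB
        have h2 : x.mulVec v - β • v ∈ A := by rw [← hfa]; exact hvf
        have h3 : (α - β) • v ∈ A := by
          have : (α - β) • v = (x.mulVec v - β • v) - (x.mulVec v - α • v) := by module
          rw [this]; exact A.sub_mem h2 h1
        have := A.smul_mem (α - β)⁻¹ h3
        rwa [smul_smul, inv_mul_cancel₀ (sub_ne_zero.2 hab), one_smul] at this
      have hsum := Submodule.finrank_sup_add_finrank_inf_eq (C ⊓ A.comap f) B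
      have hm1 : finrank ℂ ((C ⊓ A.comap f) ⊔ B : Submodule ℂ (Fin N → ℂ)) ≤ finrank ℂ C :=
        Submodule.finrank_mono (sup_le inf_le_left hBC)
      have hm2 : finrank ℂ ((C ⊓ A.comap f) ⊓ B : Submodule ℂ (Fin N → ℂ)) ≤ finrank ℂ A :=
        Submodule.finrank_mono hinter
      omega
    · -- (x - β) B' ⊆ A
      rintro v ⟨hvC, hvf⟩
      rw [← hfa]
      exact hvf
    · -- (x - α) C ⊆ B'
      intro v hv
      have hu : x.mulVec v - β • v ∈ B := hC v hv
      have hw1 : x.mulVec v - α • v ∈ C := by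
        have hx : x.mulVec v ∈ C := by
          have : x.mulVec v = (x.mulVec v - β • v) + β • v := by module
          rw [this]; exact C.add_mem (hBC hu) (C.smul_mem _ hv)
        exact C.sub_mem hx (C.smul_mem _ hv)
      refine ⟨hw1, ?_⟩
      have hcomm : f (x.mulVec v - α • v) =
          x.mulVec (x.mulVec v - β • v) - α • (x.mulVec v - β • v) := by
        rw [hfa]
        simp only [hLa, map_sub, _root_.map_smul]
        module
      exact Submodule.mem_comap.mpr (by rw [hcomm]; exact hB _ hu)

end Core

lemma gSet_swap_subset (N s : ℕ) (π : Fin s → ℕ) (i j : Fin s) (hij : (i : ℕ) + 1 = (j : ℕ)) :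
    gSet N s π ⊆ gSet N s (fun k => π (Equiv.swap i j k)) := by
  rintro x ⟨F, h0, htop, hmono, hrank, α, hα⟩
  have hij' : i ≠ j := fun h => by rw [h] at hij; omega
  have heq : i.succ = j.castSucc := Fin.ext (by simpa using hij)
  have hmj := hmono j
  have hrj := hrank j
  have haj := hα j
  rw [← heq] at hmj hrj haj
  obtain ⟨B', hAB', hB'C, hrB', hfβ, hfα⟩ :=
    core_swap x (hmono i) hmj (hrank i) hrj (hα i) haj
  set F' := Function.update F j.castSucc B' with hF'
  have hne0 : (0 : Fin (s + 1)) ≠ j.castSucc := by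
    intro h
    have : (0 : ℕ) = (j : ℕ) := congrArg Fin.val h
    omega
  have hnelast : Fin.last s ≠ j.castSucc := by
    intro h
    have : (s : ℕ) = (j : ℕ) := congrArg Fin.val h
    have := j.isLt
    omega
  have hcs : ∀ k : Fin s, k ≠ j → F' k.castSucc = F k.castSucc := fun k hk =>
    Function.update_of_ne (fun h => hk (Fin.castSucc_injective s h)) _ _
  have hsc : ∀ k : Fin s, k ≠ i → F' k.succ = F k.succ := by
    intro k hk
    refine Function.update_of_ne (fun h => hk ?_) _ _
    have : (k : ℕ) + 1 = (j : ℕ) := by simpa using congrArg Fin.val h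
    exact Fin.ext (by omega)
  have hFi : F' i.succ = B' := by rw [heq, hF']; exact Function.update_self _ _ _
  have hFj : F' j.castSucc = B' := Function.update_self _ _ _
  refine ⟨F', by rw [hF', Function.update_of_ne hne0]; exact h0,
    by rw [hF', Function.update_of_ne hnelast]; exact htop, ?_, ?_, fun k => α (Equiv.swap i j k), ?_⟩
  · intro k
    rcases eq_or_ne k i with rfl | hki
    · rw [hcs k hij', hFi]
      exact hAB'
    · rcases eq_or_ne k j with rfl | hkj
      · rw [hFj, hsc k (Ne.symm hij')]
        exact hB'C
      · rw [hcs k hkj, hsc k hki]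
        exact hmono k
  · intro k
    rcases eq_or_ne k i with rfl | hki
    · rw [hcs k hij', hFi]
      simp only [Equiv.swap_apply_left]
      exact hrB'
    · rcases eq_or_ne k j with rfl | hkj
      · rw [hFj, hsc k (Ne.symm hij')]
        simp only [Equiv.swap_apply_right]
        have := hrank i
        omega
      · rw [hcs k hkj, hsc k hki]
        simp only [Equiv.swap_apply_of_ne_of_ne hki hkj]
        exact hrank k
  · intro k
    rcases eq_or_ne k i with rfl | hki
    · rw [hcs k hij', hFi]
      simp only [Equiv.swap_apply_left]
      exact hfβ
    · rcases eq_or_ne k j with rfl | hkj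
      · rw [hFj, hsc k (Ne.symm hij')]
        simp only [Equiv.swap_apply_right]
        exact hfα
      · rw [hcs k hkj, hsc k hki]
        simp only [Equiv.swap_apply_of_ne_of_ne hki hkj]
        exact hα k

lemma gSet_swap_eq (N s : ℕ) (π : Fin s → ℕ) (i j : Fin s) (hij : (i : ℕ) + 1 = (j : ℕ)) :
    gSet N s (fun k => π (Equiv.swap i j k)) = gSet N s π := by
  refine Set.Subset.antisymm ?_ (gSet_swap_subset N s π i j hij)
  have h2 := gSet_swap_subset N s (fun k => π (Equiv.swap i j k)) i j hij
  have : (fun k => π (Equiv.swap i j (Equiv.swap i j k))) = π := by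
    funext k; rw [Equiv.swap_apply_self]
  rwa [this] at h2

/-- The set 𝔤^π does not depend on the ordering of the tuple π. -/
theorem gSet_reorder (N s : ℕ) (hN : 1 ≤ N) (π : Fin s → ℕ)
    (hpos : ∀ j, 1 ≤ π j) (hsum : ∑ j, π j = N)
    (τ : Equiv.Perm (Fin s)) :
    gSet N s (fun j => π (τ j)) = gSet N s π := by
  clear hN hpos hsum
  cases s with
  | zero =>
    have : (fun j => π (τ j)) = π := funext fun j => j.elim0
    rw [this]
  | succ n =>
    have key : ∀ σ : Equiv.Perm (Fin (n + 1)), ∀ π' : Fin (n + 1) → ℕ,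
        gSet N (n + 1) (fun j => π' (σ j)) = gSet N (n + 1) π' := by
      intro σ
      have hσ : σ ∈ Submonoid.closure
          (Set.range fun i : Fin n => Equiv.swap i.castSucc i.succ) := by
        rw [Equiv.Perm.mclosure_swap_castSucc_succ]; trivial
      induction hσ using Submonoid.closure_induction with
      | mem σ hσ =>
        obtain ⟨i, rfl⟩ := hσ
        intro π'
        exact gSet_swap_eq N (n + 1) π' i.castSucc i.succ (by simp)
      | one =>
        intro π'
        rfl
      | mul a b ha hb hha hhb =>
        intro π'
        exact (hhb fun k => π' (a k)).trans (hha π')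
    exact key τ π
end

section
/- Let a, b ≥ 1 and N = a + b, let x be an N×N complex matrix, and let α, β ∈ ℂ. Suppose there exists a subspace V ⊆ ℂ^N of dimension a such that x v = α v for all v ∈ V and (x − β·id)(ℂ^N) ⊆ V. Then there exists a subspace W ⊆ ℂ^N of dimension b such that x w = β w for all w ∈ W and (x − α·id)(ℂ^N) ⊆ W. -/
open Module Submodule

lemma aux_intermediate {E : Type*} [AddCommGroup E] [Module ℂ E] [FiniteDimensional ℂ E]
    (q : Submodule ℂ E) :
    ∀ (k : ℕ) (p : Submodule ℂ E), p ≤ q → finrank ℂ p + k ≤ finrank ℂ q →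
      ∃ W, p ≤ W ∧ W ≤ q ∧ finrank ℂ W = finrank ℂ p + k := by
  intro k
  induction k with
  | zero => intro p hpq _; exact ⟨p, le_rfl, hpq, by simp⟩
  | succ k ih =>
    intro p hpq hle
    have hlt : p < q := by
      rcases lt_or_eq_of_le hpq with h | h
      · exact h
      · subst h; omega
    obtain ⟨x, hxq, hxp⟩ := SetLike.exists_of_lt hlt
    have hx0 : x ≠ 0 := fun h => hxp (h ▸ p.zero_mem)
    have hinf : p ⊓ Submodule.span ℂ {x} = ⊥ := by
      rw [eq_bot_iff]
      intro y hy
      obtain ⟨hyp, hys⟩ := Submodule.mem_inf.mp hy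
      obtain ⟨c, rfl⟩ := Submodule.mem_span_singleton.mp hys
      rcases eq_or_ne c 0 with rfl | hc
      · simp
      · have hx : x ∈ p := by
          have := Submodule.smul_mem p c⁻¹ hyp
          rwa [inv_smul_smul₀ hc] at this
        exact absurd hx hxp
    have hrank : finrank ℂ ↥(p ⊔ Submodule.span ℂ {x}) = finrank ℂ p + 1 := by
      have := Submodule.finrank_sup_add_finrank_inf_eq p (Submodule.span ℂ {x})
      rw [hinf, finrank_bot, finrank_span_singleton hx0] at this
      omega
    have hp'q : p ⊔ Submodule.span ℂ {x} ≤ q := sup_le hpq (by simpa [Submodule.span_le] using hxq)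
    obtain ⟨W, h1, h2, h3⟩ := ih (p ⊔ Submodule.span ℂ {x}) hp'q (by omega)
    exact ⟨W, le_trans le_sup_left h1, h2, by omega⟩

/-- If an (a+b)×(a+b) complex matrix x acts as the scalar α on an a-dimensional
subspace V and as the scalar β on the quotient ℂ^{a+b}/V, then there is a
b-dimensional subspace W on which x acts as β, with x acting as α on the
quotient by W. -/
theorem swap_scalar_flag (a b : ℕ) (ha : 1 ≤ a) (hb : 1 ≤ b)
    (x : Matrix (Fin (a + b)) (Fin (a + b)) ℂ) (α β : ℂ)
    (V : Submodule ℂ (Fin (a + b) → ℂ))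
    (hVdim : Module.finrank ℂ V = a)
    (hVeig : ∀ v ∈ V, x.mulVec v = α • v)
    (hVquot : ∀ u : Fin (a + b) → ℂ, x.mulVec u - β • u ∈ V) :
    ∃ W : Submodule ℂ (Fin (a + b) → ℂ),
      Module.finrank ℂ W = b ∧
      (∀ w ∈ W, x.mulVec w = β • w) ∧
      (∀ u : Fin (a + b) → ℂ, x.mulVec u - α • u ∈ W) := by
  set f : (Fin (a+b) → ℂ) →ₗ[ℂ] (Fin (a+b) → ℂ) := x.mulVecLin with hf
  set g : (Fin (a+b) → ℂ) →ₗ[ℂ] (Fin (a+b) → ℂ) := f - α • LinearMap.id with hg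
  set h : (Fin (a+b) → ℂ) →ₗ[ℂ] (Fin (a+b) → ℂ) := f - β • LinearMap.id with hh
  have hgv : ∀ u, g u = x.mulVec u - α • u := fun u => rfl
  have hhv : ∀ u, h u = x.mulVec u - β • u := fun u => rfl
  have hVkg : V ≤ LinearMap.ker g := by
    intro v hv
    rw [LinearMap.mem_ker, hgv, hVeig v hv, sub_self]
  have hrh : LinearMap.range h ≤ V := by
    rintro _ ⟨u, rfl⟩; exact hVquot u
  have hcomm : ∀ u, g (h u) = h (g u) := by
    intro u
    simp only [hgv, hhv, Matrix.mulVec_sub, Matrix.mulVec_smul, smul_sub, smul_smul]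
    module
  have htot : finrank ℂ (Fin (a+b) → ℂ) = a + b := by simp
  have hrn_g := LinearMap.finrank_range_add_finrank_ker g
  have hrn_h := LinearMap.finrank_range_add_finrank_ker h
  rw [htot] at hrn_g hrn_h
  have hkg_ge : a ≤ finrank ℂ (LinearMap.ker g) := le_trans (le_of_eq hVdim.symm) (Submodule.finrank_mono hVkg)
  have hrh_le : finrank ℂ (LinearMap.range h) ≤ a := le_trans (Submodule.finrank_mono hrh) (le_of_eq hVdim)
  rcases eq_or_ne α β with rfl | hab
  · -- α = β case: intermediate subspace between range g and ker g
    have hrkg : LinearMap.range g ≤ LinearMap.ker g := by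
      rintro _ ⟨u, rfl⟩
      exact hVkg (hVquot u)
    have hrg_le : finrank ℂ (LinearMap.range g) ≤ a := le_trans (Submodule.finrank_mono (by rintro _ ⟨u, rfl⟩; exact hVquot u)) (le_of_eq hVdim)
    have h1 : finrank ℂ (LinearMap.range g) ≤ b := by omega
    obtain ⟨W, hW1, hW2, hW3⟩ := aux_intermediate (LinearMap.ker g)
      (b - finrank ℂ (LinearMap.range g)) (LinearMap.range g) hrkg (by omega)
    refine ⟨W, by omega, ?_, ?_⟩
    · intro w hw
      have hzero := LinearMap.mem_ker.mp (hW2 hw)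
      rw [hgv, sub_eq_zero] at hzero
      exact hzero
    · intro u
      exact hW1 ⟨u, hgv u⟩
  · -- α ≠ β: W = ker h
    refine ⟨LinearMap.ker h, ?_, ?_, ?_⟩
    · have hdisj : LinearMap.ker g ⊓ LinearMap.ker h = ⊥ := by
        rw [eq_bot_iff]
        intro v hv
        obtain ⟨hvg, hvh⟩ := Submodule.mem_inf.mp hv
        rw [LinearMap.mem_ker, hgv, sub_eq_zero] at hvg
        rw [LinearMap.mem_ker, hhv, sub_eq_zero] at hvh
        have hz : (α - β) • v = 0 := by rw [sub_smul, ← hvg, ← hvh, sub_self]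
        rcases smul_eq_zero.mp hz with h' | h'
        · exact absurd (sub_eq_zero.mp h') hab
        · simp [h']
      have hsup := Submodule.finrank_sup_add_finrank_inf_eq (LinearMap.ker g) (LinearMap.ker h)
      rw [hdisj, finrank_bot] at hsup
      have hle : finrank ℂ ↥(LinearMap.ker g ⊔ LinearMap.ker h) ≤ a + b := by
        have := Submodule.finrank_le (LinearMap.ker g ⊔ LinearMap.ker h)
        rwa [htot] at this
      omega
    · intro w hw
      rw [LinearMap.mem_ker, hhv, sub_eq_zero] at hw
      exact hw
    · intro u
      have hz : h (g u) = 0 := by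
        rw [← hcomm]
        have hk : g (h u) = 0 := LinearMap.mem_ker.mp (hVkg (hVquot u))
        rw [hk]
      have : g u ∈ LinearMap.ker h := LinearMap.mem_ker.mpr hz
      rwa [hgv] at this
end

section
/- Let N ≥ 1, let x be a nilpotent N×N complex matrix, and let π₁ ≥ π₂ ≥ ⋯ ≥ π_s ≥ 1 be integers with π₁ + ⋯ + π_s = N. Then the following are equivalent: (i) there exist a chain of subspaces 0 = F₀ ⊆ F₁ ⊆ ⋯ ⊆ F_s = ℂ^N and a permutation τ of {1, …, s} such that dim_ℂ F_j − dim_ℂ F_{j−1} = π_{τ(j)} and x(F_j) ⊆ F_{j−1} for all j = 1, …, s; (ii) for every k ∈ {1, …, s}, dim_ℂ ker(x^k) ≥ π₁ + π₂ + ⋯ + π_k. -/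
/-!
Let `f` be `x` acting on `V = ℂ^N`. If `f` maps each step `F_j` of a flag into `F_(j-1)`, walk up
the flag applying one more power of `f` at each of `k` chosen steps: each chosen step lowers the
dimension of the image by its jump, so `rank f^k ≤ N - (sum of the chosen jumps)`; choosing the
steps carrying `π₁, …, π_k` gives (ii).

Conversely, by induction on `s`, take `F₁ ⊆ ker f` of dimension `π₁` meeting every
`ker f ⊓ range f^k` in as large a dimension as possible. Since
`dim ker f^(k+1) = dim ker f^k + dim (ker f ⊓ range f^k)` and, for the map `f̄` induced on `V ⧸ F₁`,
`dim ker f̄^k + π₁ = dim ker f^k + dim (F₁ ⊓ range f^k)`, the kernel bounds for `(π₂, …, π_s)`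
hold on `V ⧸ F₁`; the flag found there pulls back. This even gives `τ = 1`.
-/

open Module LinearMap Submodule

variable {K V V₂ : Type*} [Field K] [AddCommGroup V] [Module K V] [AddCommGroup V₂] [Module K V₂]

theorem Module.End.antitone_ker_inf_range_pow (f : Module.End K V) :
    Antitone fun k : ℕ => ker f ⊓ range (f ^ k) := by
  intro k l hkl
  obtain ⟨m, rfl⟩ := Nat.exists_eq_add_of_le hkl
  dsimp only
  rw [pow_add, mul_eq_comp]
  exact inf_le_inf_left _ (range_comp_le_range _ _)

variable [FiniteDimensional K V]

namespace Submodule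

theorem finrank_map_add_finrank_inf_ker (φ : V →ₗ[K] V₂) (B : Submodule K V) :
    finrank K (B.map φ) + finrank K ↥(B ⊓ ker φ) = finrank K B := by
  have := (φ.domRestrict B).finrank_range_add_finrank_ker
  rwa [range_domRestrict, ker_domRestrict, ← finrank_map_subtype_eq, map_comap_subtype] at this

theorem finrank_map_add_le_of_le (φ : V →ₗ[K] V₂) {A B : Submodule K V} (hAB : A ≤ B) :
    finrank K (B.map φ) + finrank K A ≤ finrank K (A.map φ) + finrank K B := by
  have hA := finrank_map_add_finrank_inf_ker φ A
  have hB := finrank_map_add_finrank_inf_ker φ B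
  have := finrank_mono (inf_le_inf_right (ker φ) hAB)
  omega

theorem finrank_comap (φ : V →ₗ[K] V₂) (S : Submodule K V₂) :
    finrank K (S.comap φ) = finrank K (ker φ) + finrank K ↥(S ⊓ range φ) := by
  have := finrank_map_add_finrank_inf_ker φ (S.comap φ)
  rw [map_comap_eq, inf_eq_right.mpr (ker_le_comap φ), inf_comm] at this
  omega

theorem finrank_comap_mkQ (W : Submodule K V) (S : Submodule K (V ⧸ W)) :
    finrank K (S.comap W.mkQ) = finrank K S + finrank K W := by
  rw [finrank_comap, ker_mkQ, range_mkQ, inf_top_eq, add_comm]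

theorem exists_le_le_finrank_eq {L U : Submodule K V} (hLU : L ≤ U) {d : ℕ}
    (hL : finrank K L ≤ d) (hU : d ≤ finrank K U) :
    ∃ M : Submodule K V, L ≤ M ∧ M ≤ U ∧ finrank K M = d := by
  induction d, hL using Nat.le_induction with
  | base => exact ⟨L, le_rfl, hLU, rfl⟩
  | succ d _ ih =>
    obtain ⟨M, hLM, hMU, rfl⟩ := ih (by omega)
    obtain ⟨v, hvU, hvM⟩ := SetLike.exists_of_lt (lt_of_le_of_ne hMU (by rintro rfl; omega))
    exact ⟨M ⊔ K ∙ v, le_sup_of_le_left hLM, sup_le hMU (span_singleton_le_iff_mem v U |>.mpr hvU),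
      finrank_sup_span_singleton hvM⟩

theorem exists_finrank_eq_min_le_finrank_inf {W : ℕ → Submodule K V} (hW : Antitone W) {d : ℕ}
    (hd : d ≤ finrank K (W 0)) (hex : ∃ m, finrank K (W m) ≤ d) :
    ∃ M ≤ W 0, finrank K M = d ∧ ∀ k, min d (finrank K (W k)) ≤ finrank K ↥(M ⊓ W k) := by
  classical
  set m := Nat.find hex
  have hm_pred : d ≤ finrank K (W (m - 1)) := by
    rcases Nat.eq_zero_or_pos m with hm | hm
    · rwa [hm]
    · exact (not_le.mp (Nat.find_min hex (show m - 1 < m by omega))).le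
  obtain ⟨M, hWM, hMW, hM⟩ :=
    exists_le_le_finrank_eq (hW (Nat.sub_le m 1)) (Nat.find_spec hex) hm_pred
  refine ⟨M, hMW.trans (hW (Nat.zero_le _)), hM, fun k => ?_⟩
  rcases lt_or_ge k m with hk | hk
  · rw [inf_eq_left.mpr (hMW.trans (hW (by omega))), hM]
    exact min_le_left _ _
  · rw [inf_eq_right.mpr ((hW hk).trans hWM)]
    exact min_le_right _ _

end Submodule

namespace Module.End

theorem finrank_ker_pow_succ (f : Module.End K V) (k : ℕ) :
    finrank K (ker (f ^ (k + 1))) =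
      finrank K (ker (f ^ k)) + finrank K ↥(ker f ⊓ range (f ^ k)) := by
  rw [pow_succ', mul_eq_comp, ker_comp, finrank_comap]

theorem finrank_ker_mapQ_pow_add (f : Module.End K V) {W : Submodule K V} (h : W ≤ W.comap f)
    (k : ℕ) : finrank K (ker (W.mapQ W f h ^ k)) + finrank K W =
      finrank K (ker (f ^ k)) + finrank K ↥(W ⊓ range (f ^ k)) := by
  rw [← W.mapQ_pow h k, ker_mapQ, ← finrank_comap_mkQ, comap_map_mkQ,
    sup_eq_right.mpr (W.le_comap_pow_of_le_comap h k), finrank_comap]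

end Module.End

def initialSum {s : ℕ} (a : Fin s → ℕ) (k : ℕ) : ℕ :=
  ∑ j ∈ Finset.univ.filter (fun j : Fin s => (j : ℕ) < k), a j

section initialSum

variable {s : ℕ}

@[simp]
theorem initialSum_zero (a : Fin s → ℕ) : initialSum a 0 = 0 := by
  simp [initialSum]

theorem initialSum_self (a : Fin s → ℕ) : initialSum a s = ∑ j, a j := by
  simp [initialSum]

theorem initialSum_succ (a : Fin s → ℕ) {k : ℕ} (hk : k < s) :
    initialSum a (k + 1) = initialSum a k + a ⟨k, hk⟩ := by
  have : Finset.univ.filter (fun j : Fin s => (j : ℕ) < k + 1) =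
      insert ⟨k, hk⟩ (Finset.univ.filter (fun j : Fin s => (j : ℕ) < k)) := by
    ext j
    simp only [Finset.mem_filter, Finset.mem_univ, true_and, Finset.mem_insert, Fin.ext_iff]
    omega
  rw [initialSum, this, Finset.sum_insert (by simp), add_comm, initialSum]

theorem initialSum_succ_eq_add_tail (a : Fin (s + 1) → ℕ) (k : ℕ) :
    initialSum a (k + 1) = a 0 + initialSum (Fin.tail a) k := by
  simp [initialSum, Finset.sum_filter, Fin.sum_univ_succ, Fin.tail]

end initialSum

namespace Module.End

/-- `f ∈ 𝔤^a` in the notation of the paper. -/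
def HasNilFlag {s : ℕ} (f : Module.End K V) (a : Fin s → ℕ) : Prop :=
  ∃ F : Fin (s + 1) → Submodule K V, F 0 = ⊥ ∧ F (Fin.last s) = ⊤ ∧
    (∀ j : Fin s, F j.castSucc ≤ F j.succ) ∧
    (∀ j : Fin s, finrank K (F j.succ) = finrank K (F j.castSucc) + a j) ∧
    (∀ j : Fin s, ∀ v ∈ F j.succ, f v ∈ F j.castSucc)

variable {s : ℕ} {f : Module.End K V}

theorem HasNilFlag.sum_le_finrank_ker {a : Fin s → ℕ} (h : f.HasNilFlag a)
    (J : Finset (Fin s)) : ∑ j ∈ J, a j ≤ finrank K (ker (f ^ J.card)) := by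
  obtain ⟨F, -, htop, hmono, hdim, hmaps⟩ := h
  -- `J.filter (·.castSucc < j)` are the steps of `J` below `F j`.
  have key : ∀ j : Fin (s + 1),
      finrank K ((F j).map (f ^ (J.filter (·.castSucc < j)).card)) +
        ∑ i ∈ J.filter (·.castSucc < j), a i ≤ finrank K (F j) := by
    intro j
    induction j using Fin.induction with
    | zero => simpa using finrank_map_le _ (F 0)
    | succ i ih =>
      by_cases hi : i ∈ J
      · have hT :
            J.filter (·.castSucc < i.succ) = insert i (J.filter (·.castSucc < i.castSucc)) := by
          ext l
          simp only [Finset.mem_filter, Finset.mem_insert, Fin.castSucc_lt_succ_iff,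
            Fin.castSucc_lt_castSucc_iff, le_iff_lt_or_eq]
          aesop
        have hstep : (F i.succ).map f ≤ F i.castSucc := map_le_iff_le_comap.mpr (hmaps i)
        have := finrank_mono (map_mono hstep (f := f ^ (J.filter (·.castSucc < i.castSucc)).card))
        rw [hT, Finset.card_insert_of_notMem (by simp), Finset.sum_insert (by simp), pow_succ,
          mul_eq_comp, map_comp, hdim i]
        omega
      · have hT : J.filter (·.castSucc < i.succ) = J.filter (·.castSucc < i.castSucc) := by
          ext l
          simp only [Finset.mem_filter, Fin.castSucc_lt_succ_iff, Fin.castSucc_lt_castSucc_iff]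
          exact and_congr_right fun hl => (ne_of_mem_of_not_mem hl hi).le_iff_lt
        have := finrank_map_add_le_of_le (f ^ (J.filter (·.castSucc < i.castSucc)).card) (hmono i)
        rw [hT]
        omega
  have hlast := key (Fin.last s)
  rw [Finset.filter_true_of_mem fun i _ => Fin.castSucc_lt_last i, htop, Submodule.map_top,
    finrank_top] at hlast
  have := (f ^ J.card).finrank_range_add_finrank_ker
  omega

theorem HasNilFlag.initialSum_le_finrank_ker {π : Fin s → ℕ} {τ : Equiv.Perm (Fin s)}
    (h : f.HasNilFlag (π ∘ τ)) {k : ℕ} (hk : k ≤ s) :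
    initialSum π k ≤ finrank K (ker (f ^ k)) := by
  have hJ := h.sum_le_finrank_ker (Finset.univ.filter fun j => (τ j : ℕ) < k)
  have hsum : ∑ j ∈ Finset.univ.filter (fun j => (τ j : ℕ) < k), (π ∘ τ) j = initialSum π k := by
    rw [initialSum, Finset.sum_filter, Finset.sum_filter]
    exact Equiv.sum_comp τ fun i => if (i : ℕ) < k then π i else 0
  have hcard : (Finset.univ.filter fun j => (τ j : ℕ) < k).card = k := by
    rw [Finset.card_filter, Equiv.sum_comp τ fun i => if (i : ℕ) < k then 1 else 0,
      ← Finset.card_filter, Fin.card_filter_val_lt, min_eq_right hk]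
  rwa [hsum, hcard] at hJ

theorem HasNilFlag.cons {W : Submodule K V} {h : W ≤ W.comap f} (hW : W ≤ ker f) {a : Fin s → ℕ}
    (hg : HasNilFlag (W.mapQ W f h) a) : f.HasNilFlag (Fin.cons (finrank K W) a) := by
  obtain ⟨G, hbot, htop, hmono, hdim, hmaps⟩ := hg
  have hG0 : (G 0).comap W.mkQ = W := by rw [hbot, comap_bot, ker_mkQ]
  refine ⟨Fin.cons ⊥ fun j => (G j).comap W.mkQ, rfl, ?_, fun j => ?_, fun j => ?_, fun j => ?_⟩
  · rw [← Fin.succ_last, Fin.cons_succ, htop, comap_top]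
  · cases j using Fin.cases with
    | zero => exact bot_le
    | succ i =>
      rw [← Fin.succ_castSucc, Fin.cons_succ, Fin.cons_succ]
      exact comap_mono (hmono i)
  · cases j using Fin.cases with
    | zero =>
      rw [Fin.cons_succ, Fin.castSucc_zero, Fin.cons_zero, Fin.cons_zero, hG0, finrank_bot,
        zero_add]
    | succ i =>
      rw [← Fin.succ_castSucc, Fin.cons_succ, Fin.cons_succ, Fin.cons_succ, finrank_comap_mkQ,
        finrank_comap_mkQ, hdim i]
      ring
  · cases j using Fin.cases with
    | zero =>
      intro v hv
      rw [Fin.cons_succ, hG0] at hv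
      simp [mem_ker.mp (hW hv)]
    | succ i =>
      intro v hv
      rw [Fin.cons_succ] at hv
      rw [← Fin.succ_castSucc, Fin.cons_succ]
      exact hmaps i _ hv

theorem hasNilFlag_of_initialSum_le {s : ℕ} (f : Module.End K V) {π : Fin s → ℕ}
    (hπ : Antitone π) (hsum : ∑ j, π j = finrank K V)
    (hker : ∀ k ≤ s, initialSum π k ≤ finrank K (ker (f ^ k))) :
    f.HasNilFlag π := by
  induction s generalizing V with
  | zero =>
    have htop : (⊤ : Submodule K V) = ⊥ := by
      rw [← finrank_eq_zero, finrank_top, ← hsum, Finset.univ_eq_empty, Finset.sum_empty]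
    exact ⟨fun _ => ⊥, rfl, htop.symm, finZeroElim, finZeroElim, finZeroElim⟩
  | succ n ih =>
    have hnil : f ^ (n + 1) = 0 := by
      have := hker (n + 1) le_rfl
      rw [initialSum_self, hsum] at this
      exact ker_eq_top.mp (eq_top_of_finrank_eq (le_antisymm (finrank_le _) this))
    have hd : π 0 ≤ finrank K ↥(ker f ⊓ range (f ^ 0)) := by
      rw [pow_zero, one_eq_id, range_id, inf_top_eq]
      have := hker 1 (by omega)
      rwa [pow_one, initialSum_succ_eq_add_tail, initialSum_zero, add_zero] at this
    have hlast : finrank K ↥(ker f ⊓ range (f ^ (n + 1))) ≤ π 0 := by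
      rw [hnil, LinearMap.range_zero, inf_bot_eq, finrank_bot]
      exact Nat.zero_le _
    obtain ⟨F₁, hF₁, hF₁d, hF₁range⟩ :=
      exists_finrank_eq_min_le_finrank_inf (antitone_ker_inf_range_pow f) hd ⟨n + 1, hlast⟩
    have hF₁ker : F₁ ≤ ker f := hF₁.trans inf_le_left
    have hinv : F₁ ≤ F₁.comap f := fun v hv => by simp [mem_ker.mp (hF₁ker hv)]
    rw [← Fin.cons_self_tail π, ← hF₁d]
    refine HasNilFlag.cons (h := hinv) hF₁ker
      (ih _ (hπ.comp_monotone Fin.strictMono_succ.monotone) ?_ ?_)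
    · have := F₁.finrank_quotient_add_finrank
      rw [Fin.sum_univ_succ] at hsum
      simp only [Fin.tail]
      omega
    · -- If `dim (ker f ⊓ range f^k) ≥ π 0` then `F₁ ≤ range f^k` and the bound at `k` suffices;
      -- otherwise `F₁ ⊇ ker f ⊓ range f^k` and the bound at `k + 1` does.
      intro k hk
      have hk₀ := hker k (by omega)
      have hk₁ := hker (k + 1) (by omega)
      have hshift := initialSum_succ_eq_add_tail π k
      have hstep := initialSum_succ π (Nat.lt_succ_of_le hk)
      have hle : π ⟨k, by omega⟩ ≤ π 0 := hπ (Fin.zero_le _)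
      have hquot := finrank_ker_mapQ_pow_add f hinv k
      have hpow := finrank_ker_pow_succ f k
      have hdeep := hF₁range k
      have := finrank_mono (inf_le_inf_left F₁ (inf_le_right : ker f ⊓ range (f ^ k) ≤ _))
      omega

end Module.End

open Module.End in
theorem nilpotent_flag_iff_kernel_dims_general (N s : ℕ)
    (x : Matrix (Fin N) (Fin N) ℂ)
    (π : Fin s → ℕ)
    (hmono : ∀ i j : Fin s, i ≤ j → π j ≤ π i)
    (hsum : ∑ j, π j = N) :
    (∃ F : Fin (s + 1) → Submodule ℂ (Fin N → ℂ), ∃ τ : Equiv.Perm (Fin s),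
        F 0 = ⊥ ∧ F (Fin.last s) = ⊤ ∧
        (∀ j : Fin s, F j.castSucc ≤ F j.succ) ∧
        (∀ j : Fin s, Module.finrank ℂ (F j.succ) =
          Module.finrank ℂ (F j.castSucc) + π (τ j)) ∧
        (∀ j : Fin s, ∀ v ∈ F j.succ, x.mulVec v ∈ F j.castSucc)) ↔
      (∀ k : ℕ, 1 ≤ k → k ≤ s →
        ∑ j ∈ Finset.univ.filter (fun j : Fin s => (j : ℕ) < k), π j ≤
          Module.finrank ℂ (LinearMap.ker (Matrix.mulVecLin (x ^ k)))) := by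
  have hpow (k : ℕ) : Matrix.mulVecLin (x ^ k) = Matrix.mulVecLin x ^ k := by
    simpa only [Matrix.toLin'_apply'] using Matrix.toLin'_pow x k
  constructor
  · rintro ⟨F, τ, hflag⟩ k - hk
    rw [hpow]
    exact HasNilFlag.initialSum_le_finrank_ker (f := Matrix.mulVecLin x) (π := π) ⟨F, hflag⟩ hk
  · intro hker
    have hker' : ∀ k ≤ s, initialSum π k ≤ finrank ℂ (ker (Matrix.mulVecLin x ^ k)) := by
      rintro (_ | k) hk
      · simp
      · rw [← hpow]
        exact hker (k + 1) (by omega) hk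
    obtain ⟨F, hF⟩ :=
      hasNilFlag_of_initialSum_le (Matrix.mulVecLin x) (fun i j => hmono i j) (by simp [hsum]) hker'
    exact ⟨F, 1, hF⟩

/-- For a nilpotent N×N complex matrix x and a decreasing tuple of positive
integers π summing to N, x preserves a flag whose dimension jumps are the
parts of π in some order and acts as zero on successive quotients, if and
only if dim ker(x^k) ≥ π₁ + ⋯ + π_k for every k ∈ {1, …, s}. -/
theorem nilpotent_flag_iff_kernel_dims (N s : ℕ) (hN : 1 ≤ N)
    (x : Matrix (Fin N) (Fin N) ℂ) (hx : IsNilpotent x)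
    (π : Fin s → ℕ) (hpos : ∀ j, 1 ≤ π j)
    (hmono : ∀ i j : Fin s, i ≤ j → π j ≤ π i)
    (hsum : ∑ j, π j = N) :
    (∃ F : Fin (s + 1) → Submodule ℂ (Fin N → ℂ), ∃ τ : Equiv.Perm (Fin s),
        F 0 = ⊥ ∧ F (Fin.last s) = ⊤ ∧
        (∀ j : Fin s, F j.castSucc ≤ F j.succ) ∧
        (∀ j : Fin s, Module.finrank ℂ (F j.succ) =
          Module.finrank ℂ (F j.castSucc) + π (τ j)) ∧
        (∀ j : Fin s, ∀ v ∈ F j.succ, x.mulVec v ∈ F j.castSucc)) ↔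
      (∀ k : ℕ, 1 ≤ k → k ≤ s →
        ∑ j ∈ Finset.univ.filter (fun j : Fin s => (j : ℕ) < k), π j ≤
          Module.finrank ℂ (LinearMap.ker (Matrix.mulVecLin (x ^ k)))) :=
  nilpotent_flag_iff_kernel_dims_general N s x π hmono hsum
end

section
/- Let m, n ≥ 1 and let N_{m,n} be the mn×mn complex matrix which, regarded as an m×m array of n×n blocks, has the n×n identity matrix in each block (i, i+1) for 1 ≤ i ≤ m−1 and zero blocks elsewhere. Let X be an mn×mn complex matrix which, regarded as an m×m array of n×n blocks (X_{ij}), satisfies X_{ij} = 0 whenever j ≥ 2. If there exists an mn×mn complex matrix Z with X = N_{m,n} Z − Z N_{m,n}, then X = 0. (This shows the affine slice S_{m,n} meets the tangent space of the adjoint orbit of N_{m,n} only in N_{m,n}, i.e. S_{m,n} is a transverse slice.) -/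
open Matrix

/-- The nilpotent mn×mn matrix N_{m,n}: as an m×m array of n×n blocks, it has
the identity block in position (i, i+1) for 1 ≤ i ≤ m−1 and zero blocks
elsewhere. -/
def Nmn (m n : ℕ) : Matrix (Fin m × Fin n) (Fin m × Fin n) ℂ :=
  Matrix.of fun p q => if (q.1 : ℕ) = (p.1 : ℕ) + 1 ∧ p.2 = q.2 then 1 else 0

/-- Auxiliary matrix pairing with the entry X_{(k,a),(0,b)}. -/
def Mk (m n k : ℕ) (a b : Fin n) : Matrix (Fin m × Fin n) (Fin m × Fin n) ℂ :=
  Matrix.of fun r c => if (c.1 : ℕ) = (r.1 : ℕ) + k ∧ r.2 = b ∧ c.2 = a then 1 else 0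

lemma Nmn_mul_apply (m n : ℕ) (A : Matrix (Fin m × Fin n) (Fin m × Fin n) ℂ)
    (p q : Fin m × Fin n) :
    (Nmn m n * A) p q =
      if h : (p.1 : ℕ) + 1 < m then A (⟨(p.1 : ℕ) + 1, h⟩, p.2) q else 0 := by
  rw [Matrix.mul_apply]
  split_ifs with h
  · rw [Finset.sum_eq_single ((⟨(p.1 : ℕ) + 1, h⟩ : Fin m), p.2)]
    · simp [Nmn]
    · rintro ⟨r1, r2⟩ _ hr
      simp only [Nmn, Matrix.of_apply]
      rw [if_neg]
      · ring
      · rintro ⟨h1, h2⟩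
        exact hr (by ext <;> simp_all)
    · intro hmem; exact absurd (Finset.mem_univ _) hmem
  · apply Finset.sum_eq_zero
    rintro ⟨r1, r2⟩ _
    simp only [Nmn, Matrix.of_apply]
    rw [if_neg]
    · ring
    · rintro ⟨h1, _⟩
      exact absurd (h1 ▸ r1.isLt) h

lemma mul_Nmn_apply (m n : ℕ) (A : Matrix (Fin m × Fin n) (Fin m × Fin n) ℂ)
    (p q : Fin m × Fin n) :
    (A * Nmn m n) p q =
      if h : 0 < (q.1 : ℕ) then A p (⟨(q.1 : ℕ) - 1, by omega⟩, q.2) else 0 := by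
  rw [Matrix.mul_apply]
  split_ifs with h
  · rw [Finset.sum_eq_single ((⟨(q.1 : ℕ) - 1, by omega⟩ : Fin m), q.2)]
    · simp only [Nmn, Matrix.of_apply]
      rw [if_pos]
      · ring
      · exact ⟨by omega, by trivial⟩
    · rintro ⟨r1, r2⟩ _ hr
      simp only [Nmn, Matrix.of_apply]
      rw [if_neg]
      · ring
      · rintro ⟨h1, h2⟩
        exact hr (by ext <;> simp_all <;> omega)
    · intro hmem; exact absurd (Finset.mem_univ _) hmem
  · apply Finset.sum_eq_zero
    rintro ⟨r1, r2⟩ _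
    simp only [Nmn, Matrix.of_apply]
    rw [if_neg]
    · ring
    · rintro ⟨h1, _⟩
      omega

lemma Nmn_comm_Mk (m n k : ℕ) (a b : Fin n) :
    Nmn m n * Mk m n k a b = Mk m n k a b * Nmn m n := by
  ext p q
  rw [Nmn_mul_apply, mul_Nmn_apply]
  by_cases h1 : (p.1 : ℕ) + 1 < m <;> by_cases h2 : 0 < (q.1 : ℕ)
  · rw [dif_pos h1, dif_pos h2]
    simp only [Mk, Matrix.of_apply]
    apply if_congr _ rfl rfl
    constructor
    · rintro ⟨h, hb, ha⟩; exact ⟨by omega, hb, ha⟩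
    · rintro ⟨h, hb, ha⟩; exact ⟨by omega, hb, ha⟩
  · rw [dif_pos h1, dif_neg h2]
    simp only [Mk, Matrix.of_apply]
    rw [if_neg]
    rintro ⟨h, -, -⟩
    omega
  · rw [dif_neg h1, dif_pos h2]
    simp only [Mk, Matrix.of_apply]
    rw [if_neg]
    · rintro ⟨h, -, -⟩
      have := q.1.isLt
      omega
  · rw [dif_neg h1, dif_neg h2]

lemma trace_mul_Mk (m n : ℕ) (hm : 1 ≤ m)
    (X : Matrix (Fin m × Fin n) (Fin m × Fin n) ℂ)
    (hX : ∀ p q : Fin m × Fin n, (q.1 : ℕ) ≠ 0 → X p q = 0)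
    (k : Fin m) (a b : Fin n) :
    Matrix.trace (X * Mk m n (k : ℕ) a b) = X (k, a) (⟨0, by omega⟩, b) := by
  rw [Matrix.trace, Finset.sum_eq_single ((k, a) : Fin m × Fin n)]
  · rw [Matrix.diag_apply, Matrix.mul_apply,
      Finset.sum_eq_single (((⟨0, by omega⟩ : Fin m), b) : Fin m × Fin n)]
    · simp only [Mk, Matrix.of_apply]
      rw [if_pos]
      · ring
      · refine ⟨by simp, ?_⟩ <;> trivial
    · rintro ⟨q1, q2⟩ _ hq
      by_cases hq1 : (q1 : ℕ) = 0
      · simp only [Mk, Matrix.of_apply]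
        rw [if_neg]
        · ring
        · rintro ⟨-, hb, -⟩
          exact hq (by ext <;> simp_all)
      · rw [hX _ _ hq1]; ring
    · intro hmem; exact absurd (Finset.mem_univ _) hmem
  · rintro ⟨p1, p2⟩ _ hp
    rw [Matrix.diag_apply, Matrix.mul_apply]
    apply Finset.sum_eq_zero
    rintro ⟨q1, q2⟩ _
    by_cases hq1 : (q1 : ℕ) = 0
    · simp only [Mk, Matrix.of_apply]
      rw [if_neg]
      · ring
      · rintro ⟨h, -, ha⟩
        exact hp (by ext <;> simp_all <;> omega)
    · rw [hX _ _ hq1]; ring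
  · intro hmem; exact absurd (Finset.mem_univ _) hmem

/-- A matrix X supported in the first block column (the slice directions) that
lies in the tangent space of the adjoint orbit of N_{m,n} (i.e. is of the form
N_{m,n}Z − Z N_{m,n}) must vanish. -/
theorem slice_transverse_to_orbit (m n : ℕ) (hm : 1 ≤ m) (hn : 1 ≤ n)
    (X : Matrix (Fin m × Fin n) (Fin m × Fin n) ℂ)
    (hX : ∀ p q : Fin m × Fin n, (q.1 : ℕ) ≠ 0 → X p q = 0)
    (Z : Matrix (Fin m × Fin n) (Fin m × Fin n) ℂ)
    (hZ : X = Nmn m n * Z - Z * Nmn m n) :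
    X = 0 := by
  have h0 : ∀ (k : Fin m) (a b : Fin n),
      Matrix.trace (X * Mk m n (k : ℕ) a b) = 0 := by
    intro k a b
    rw [hZ, sub_mul, Matrix.trace_sub]
    rw [Matrix.mul_assoc (Nmn m n) Z (Mk m n k a b),
      Matrix.trace_mul_comm (Nmn m n) (Z * Mk m n k a b),
      Matrix.mul_assoc Z (Nmn m n) (Mk m n k a b),
      Nmn_comm_Mk, ← Matrix.mul_assoc Z]
    exact sub_self _
  ext p q
  by_cases hq : (q.1 : ℕ) = 0
  · have hq' : q = (⟨0, by omega⟩, q.2) := by ext <;> simp [hq]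
    have := trace_mul_Mk m n hm X hX p.1 p.2 q.2
    rw [h0] at this
    simp only [Matrix.zero_apply]
    rw [hq']
    exact this.symm
  · simp [hX p q hq]
end

section
/- Let m, n ≥ 1 and let Y ∈ S_{m,n}, with Y_{m1} denoting the bottom block of its first block column. Then dim_ℂ ker(Y) = n − rank(Y_{m1}). In particular, ker(Y) has dimension n if and only if Y_{m1} = 0. -/
/-!
Block row `i < m` of `Y x = 0` reads `Y_{i1} x_1 + x_{i+1} = 0` and the last block row reads
`Y_{m1} x_1 = 0`. So a kernel vector is determined by its first block `x_1`, and the first blocks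
that occur are exactly the vectors of `ker Y_{m1}`: the kernel of `Y` is isomorphic to that of
`Y_{m1}`, and rank–nullity for `Y_{m1}` gives the formula.
-/

open Matrix

/-- Membership in the slice S_{m,n}: as an m×m array of n×n blocks, Y has
identity blocks in positions (i, i+1), arbitrary blocks in the first block
column subject to trace(Y₁₁) = 0, and zero blocks elsewhere. -/
def InSlice (m n : ℕ) (Y : Matrix (Fin m × Fin n) (Fin m × Fin n) ℂ) : Prop :=
  (∀ (i j : Fin m) (a b : Fin n), (j : ℕ) = (i : ℕ) + 1 →
      Y (i, a) (j, b) = if a = b then 1 else 0) ∧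
  (∀ (i j : Fin m) (a b : Fin n), (j : ℕ) ≠ 0 → (j : ℕ) ≠ (i : ℕ) + 1 →
      Y (i, a) (j, b) = 0) ∧
  (∀ i : Fin m, (i : ℕ) = 0 → ∑ a : Fin n, Y (i, a) (i, a) = 0)

namespace Matrix

section Rank

variable {K ι κ : Type*} [Field K] [Fintype ι]

theorem rank_add_finrank_ker_mulVecLin (A : Matrix κ ι K) :
    A.rank + Module.finrank K (LinearMap.ker A.mulVecLin) = Fintype.card ι := by
  rw [rank, LinearMap.finrank_range_add_finrank_ker, Module.finrank_fintype_fun_eq_card]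

theorem rank_eq_zero_iff {A : Matrix κ ι K} : A.rank = 0 ↔ A = 0 := by
  classical
  rw [rank, Submodule.finrank_eq_zero, LinearMap.range_eq_bot, ← toLin'_apply',
    LinearEquiv.map_eq_zero_iff]

end Rank

section BlockCompanion

variable {R ι : Type*} [Fintype ι] {m : ℕ}

def firstColBlock (hm : 0 < m) (Y : Matrix (Fin m × ι) (Fin m × ι) R) (i : Fin m) :
    Matrix ι ι R :=
  of fun a b => Y (i, a) (⟨0, hm⟩, b)

def bottomLeftBlock (hm : 0 < m) (Y : Matrix (Fin m × ι) (Fin m × ι) R) : Matrix ι ι R :=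
  firstColBlock hm Y ⟨m - 1, Nat.sub_one_lt_of_lt hm⟩

section CommRing

variable [CommRing R]

def kernelLift (hm : 0 < m) (Y : Matrix (Fin m × ι) (Fin m × ι) R) :
    (ι → R) →ₗ[R] (Fin m × ι → R) where
  toFun v p :=
    if h : (p.1 : ℕ) = 0 then v p.2 else -(firstColBlock hm Y ⟨p.1 - 1, by omega⟩ *ᵥ v) p.2
  map_add' v w := by ext p; by_cases h : (p.1 : ℕ) = 0 <;> simp [h, mulVec_add, add_comm]
  map_smul' c v := by ext p; by_cases h : (p.1 : ℕ) = 0 <;> simp [h, mulVec_smul]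

theorem kernelLift_apply_zero (hm : 0 < m) (Y : Matrix (Fin m × ι) (Fin m × ι) R) (v : ι → R)
    (a : ι) : kernelLift hm Y v (⟨0, hm⟩, a) = v a := by
  simp [kernelLift]

theorem kernelLift_apply_succ (hm : 0 < m) (Y : Matrix (Fin m × ι) (Fin m × ι) R) (v : ι → R)
    {i : Fin m} (h : (i : ℕ) + 1 < m) (a : ι) :
    kernelLift hm Y v (⟨i + 1, h⟩, a) = -(firstColBlock hm Y i *ᵥ v) a := by
  simp [kernelLift]

theorem kernelLift_injective (hm : 0 < m) (Y : Matrix (Fin m × ι) (Fin m × ι) R) :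
    Function.Injective (kernelLift hm Y) := fun v w h =>
  funext fun a => by simpa only [kernelLift_apply_zero] using congrFun h (⟨0, hm⟩, a)

end CommRing

variable [DecidableEq ι]

structure IsBlockCompanion [Zero R] [One R] (Y : Matrix (Fin m × ι) (Fin m × ι) R) :
    Prop where
  superdiag : ∀ (i j : Fin m) (a b : ι), (j : ℕ) = i + 1 →
    Y (i, a) (j, b) = if a = b then 1 else 0
  eq_zero : ∀ (i j : Fin m) (a b : ι), (j : ℕ) ≠ 0 → (j : ℕ) ≠ i + 1 →
    Y (i, a) (j, b) = 0

theorem IsBlockCompanion.mulVec_apply [NonAssocSemiring R]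
    {Y : Matrix (Fin m × ι) (Fin m × ι) R} (hY : IsBlockCompanion Y) (hm : 0 < m)
    (x : Fin m × ι → R) (i : Fin m) (a : ι) :
    (Y *ᵥ x) (i, a) = (firstColBlock hm Y i *ᵥ fun b => x (⟨0, hm⟩, b)) a +
      if h : (i : ℕ) + 1 < m then x (⟨i + 1, h⟩, a) else 0 := by
  rw [mulVec, dotProduct, Fintype.sum_prod_type,
    ← Finset.add_sum_erase _ _ (Finset.mem_univ ⟨0, hm⟩)]
  congr 1
  split_ifs with h
  · rw [Finset.sum_eq_single_of_mem (⟨i + 1, h⟩ : Fin m) (by simp [Fin.ext_iff])]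
    · simp [hY.superdiag i ⟨i + 1, h⟩ a _ rfl]
    · intro j hj hji
      refine Finset.sum_eq_zero fun b _ => ?_
      rw [hY.eq_zero i j a b (by simpa [Fin.ext_iff] using hj)
        (by simpa [Fin.ext_iff] using hji), zero_mul]
  · refine Finset.sum_eq_zero fun j hj => Finset.sum_eq_zero fun b _ => ?_
    rw [hY.eq_zero i j a b (by simpa [Fin.ext_iff] using hj) (by omega), zero_mul]

variable [CommRing R] {Y : Matrix (Fin m × ι) (Fin m × ι) R}

theorem IsBlockCompanion.mulVec_kernelLift (hY : IsBlockCompanion Y) (hm : 0 < m) (v : ι → R)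
    (i : Fin m) (a : ι) :
    (Y *ᵥ kernelLift hm Y v) (i, a) =
      if (i : ℕ) + 1 < m then 0 else (firstColBlock hm Y i *ᵥ v) a := by
  rw [hY.mulVec_apply hm]
  simp only [kernelLift_apply_zero]
  split_ifs with h
  · rw [kernelLift_apply_succ, add_neg_cancel]
  · rw [add_zero]

theorem IsBlockCompanion.eq_kernelLift (hY : IsBlockCompanion Y) (hm : 0 < m)
    {x : Fin m × ι → R} (hx : Y *ᵥ x = 0) :
    x = kernelLift hm Y (fun b => x (⟨0, hm⟩, b)) := by
  ext ⟨j, a⟩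
  obtain hj | hj := eq_or_ne (j : ℕ) 0
  · obtain rfl : j = ⟨0, hm⟩ := Fin.ext hj
    rw [kernelLift_apply_zero]
  · obtain ⟨i, hi, rfl⟩ : ∃ (i : Fin m) (hi : (i : ℕ) + 1 < m), j = ⟨i + 1, hi⟩ :=
      ⟨⟨j - 1, by omega⟩, by simp; omega, Fin.ext (by simp; omega)⟩
    have hrow := congrFun hx (i, a)
    rw [hY.mulVec_apply hm, dif_pos hi] at hrow
    rw [kernelLift_apply_succ, eq_neg_iff_add_eq_zero, add_comm]
    exact hrow

theorem IsBlockCompanion.ker_mulVecLin (hY : IsBlockCompanion Y) (hm : 0 < m) :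
    LinearMap.ker Y.mulVecLin =
      (LinearMap.ker (bottomLeftBlock hm Y).mulVecLin).map (kernelLift hm Y) := by
  ext x
  simp only [LinearMap.mem_ker, mulVecLin_apply, Submodule.mem_map]
  constructor
  · intro hx
    refine ⟨_, ?_, (hY.eq_kernelLift hm hx).symm⟩
    ext a
    have hrow := congrFun hx (⟨m - 1, Nat.sub_one_lt_of_lt hm⟩, a)
    rwa [hY.mulVec_apply hm, dif_neg (by simp; omega), add_zero] at hrow
  · rintro ⟨v, hv, rfl⟩
    ext ⟨i, a⟩
    rw [hY.mulVec_kernelLift hm]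
    split_ifs with h
    · rfl
    · rw [show i = ⟨m - 1, Nat.sub_one_lt_of_lt hm⟩ from Fin.ext (by simp; omega)]
      exact congrFun hv a

theorem IsBlockCompanion.finrank_ker_mulVecLin (hY : IsBlockCompanion Y) (hm : 0 < m) :
    Module.finrank R (LinearMap.ker Y.mulVecLin) =
      Module.finrank R (LinearMap.ker (bottomLeftBlock hm Y).mulVecLin) := by
  rw [hY.ker_mulVecLin hm]
  exact (Submodule.equivMapOfInjective _ (kernelLift_injective hm Y) _).finrank_eq.symm

end BlockCompanion

end Matrix

theorem InSlice.isBlockCompanion {m n : ℕ} {Y : Matrix (Fin m × Fin n) (Fin m × Fin n) ℂ}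
    (hY : InSlice m n Y) : Y.IsBlockCompanion :=
  ⟨hY.1, hY.2.1⟩

/-- For Y ∈ S_{m,n}, dim ker(Y) = n − rank(Y_{m1}); in particular ker(Y) has
dimension n iff the bottom block Y_{m1} of the first block column vanishes. -/
theorem slice_kernel_dim (m n : ℕ) (hm : 0 < m)
    (Y : Matrix (Fin m × Fin n) (Fin m × Fin n) ℂ) (hY : InSlice m n Y) :
    Module.finrank ℂ (LinearMap.ker Y.mulVecLin) =
        n - (Matrix.of fun a b : Fin n =>
          Y (⟨m - 1, by omega⟩, a) (⟨0, hm⟩, b)).rank ∧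
      (Module.finrank ℂ (LinearMap.ker Y.mulVecLin) = n ↔
        (Matrix.of fun a b : Fin n =>
          Y (⟨m - 1, by omega⟩, a) (⟨0, hm⟩, b)) = 0) := by
  set B := bottomLeftBlock hm Y
  show _ = n - B.rank ∧ (_ ↔ B = 0)
  have hker : Module.finrank ℂ (LinearMap.ker Y.mulVecLin) =
      Module.finrank ℂ (LinearMap.ker B.mulVecLin) :=
    hY.isBlockCompanion.finrank_ker_mulVecLin hm
  have hrank := B.rank_add_finrank_ker_mulVecLin
  have hle := B.rank_le_width
  rw [Fintype.card_fin] at hrank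
  rw [← Matrix.rank_eq_zero_iff]
  omega
end

section
/- Let n ≥ 3 and let v, w, v′, w′ ∈ ℂⁿ be such that v ≠ 0, w ≠ 0, and v_i w_j − (1/n)(Σ_k v_k w_k)·δ_{ij} = v′_i w′_j − (1/n)(Σ_k v′_k w′_k)·δ_{ij} for all i, j. Then there exists ζ ∈ ℂ∖{0} such that v′ = ζ·v and w′ = ζ^{−1}·w. -/
open Matrix

private lemma aux_third {n : ℕ} (hn : 3 ≤ n) (i0 j0 : Fin n) :
    ∃ k : Fin n, k ≠ i0 ∧ k ≠ j0 := by
  by_contra hc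
  push_neg at hc
  have hsub : (Finset.univ : Finset (Fin n)) ⊆ {i0, j0} := by
    intro x _
    rcases eq_or_ne x i0 with rfl | hx
    · simp
    · simp [hc x hx]
  have h1 := Finset.card_le_card hsub
  rw [Finset.card_univ, Fintype.card_fin] at h1
  have h2 : ({i0, j0} : Finset (Fin n)).card ≤ 2 :=
    (Finset.card_insert_le _ _).trans (by simp)
  omega

private lemma aux_main {n : ℕ} (hn : 3 ≤ n) (v w v' w' : Fin n → ℂ)
    (h : ∀ i j : Fin n,
      v i * w j - (1 / (n : ℂ)) * (∑ k, v k * w k) * (if i = j then 1 else 0) =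
      v' i * w' j - (1 / (n : ℂ)) * (∑ k, v' k * w' k) * (if i = j then 1 else 0))
    (i0 j0 : Fin n) (hij : i0 ≠ j0) (hv0 : v i0 ≠ 0) (hw0 : w j0 ≠ 0) :
    ∃ ζ : ℂ, ζ ≠ 0 ∧ v' = ζ • v ∧ w' = ζ⁻¹ • w := by
  have hnC : (n : ℂ) ≠ 0 := Nat.cast_ne_zero.mpr (by omega)
  set S := ∑ k, v k * w k with hS
  set S' := ∑ k, v' k * w' k with hS'
  have hoff : ∀ i j : Fin n, i ≠ j → v i * w j = v' i * w' j := by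
    intro i j hij'
    simpa [if_neg hij'] using h i j
  have hdiag : ∀ i : Fin n, v i * w i - (1 / (n : ℂ)) * S = v' i * w' i - (1 / (n : ℂ)) * S' := by
    intro i
    simpa using h i i
  obtain ⟨k, hki, hkj⟩ := aux_third hn i0 j0
  have h1 : v i0 * w j0 = v' i0 * w' j0 := hoff _ _ hij
  have hne : v' i0 * w' j0 ≠ 0 := h1 ▸ mul_ne_zero hv0 hw0
  have hv'0 : v' i0 ≠ 0 := left_ne_zero_of_mul hne
  have hw'0 : w' j0 ≠ 0 := right_ne_zero_of_mul hne
  set ζ := v' i0 / v i0 with hζ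
  have hζ0 : ζ ≠ 0 := div_ne_zero hv'0 hv0
  have hζv : ζ * v i0 = v' i0 := div_mul_cancel₀ (v' i0) hv0
  have hw' : ∀ j, j ≠ i0 → w' j = ζ⁻¹ * w j := by
    intro j hj
    have e := hoff i0 j (fun e => hj e.symm)
    have e2 : v i0 * (ζ * w' j) = v i0 * w j := by
      calc v i0 * (ζ * w' j) = (ζ * v i0) * w' j := by ring
        _ = v' i0 * w' j := by rw [hζv]
        _ = v i0 * w j := e.symm
    have h3 := mul_left_cancel₀ hv0 e2
    rw [← h3, inv_mul_cancel_left₀ hζ0]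
  have hv' : ∀ i, i ≠ j0 → v' i = ζ * v i := by
    intro i hi
    have e := hoff i j0 hi
    rw [hw' j0 hij.symm] at e
    have e2 : (ζ⁻¹ * v' i) * w j0 = v i * w j0 := by
      rw [e]; ring
    have h3 := mul_right_cancel₀ hw0 e2
    rw [← h3, mul_inv_cancel_left₀ hζ0]
  have hSS : S = S' := by
    have e := hdiag k
    rw [hv' k hkj, hw' k hki] at e
    have hz : ζ * v k * (ζ⁻¹ * w k) = v k * w k := by
      rw [show ζ * v k * (ζ⁻¹ * w k) = (ζ * ζ⁻¹) * (v k * w k) from by ring,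
        mul_inv_cancel₀ hζ0, one_mul]
    rw [hz] at e
    have : (1 / (n : ℂ)) * S = (1 / (n : ℂ)) * S' := by linear_combination -e
    exact mul_left_cancel₀ (one_div_ne_zero hnC) this
  have hw'i0 : w' i0 = ζ⁻¹ * w i0 := by
    have e := hdiag i0
    rw [hSS, hv' i0 hij] at e
    have key : ζ * v i0 * w' i0 = v i0 * w i0 := by linear_combination -e
    have e2 : v i0 * (ζ * w' i0) = v i0 * w i0 := by rw [← key]; ring
    have h3 := mul_left_cancel₀ hv0 e2
    rw [← h3, inv_mul_cancel_left₀ hζ0]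
  have hv'j0 : v' j0 = ζ * v j0 := by
    have e := hdiag j0
    rw [hSS, hw' j0 hij.symm] at e
    have key : v' j0 * (ζ⁻¹ * w j0) = v j0 * w j0 := by linear_combination -e
    have e2 : (ζ⁻¹ * v' j0) * w j0 = v j0 * w j0 := by rw [← key]; ring
    have h3 := mul_right_cancel₀ hw0 e2
    rw [← h3, mul_inv_cancel_left₀ hζ0]
  refine ⟨ζ, hζ0, funext fun i => ?_, funext fun j => ?_⟩
  · rcases eq_or_ne i j0 with rfl | hi
    · simpa using hv'j0
    · simpa using hv' i hi
  · rcases eq_or_ne j i0 with rfl | hj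
    · simpa using hw'i0
    · simpa using hw' j hj

/-- Injectivity on stable orbits: if (v,w) and (v',w') with v, w ≠ 0 have the
same image under f(v,w) = vᵀw − (1/n)(v·w)·I, then they differ by the
ℂ*-action ζ·(v,w) = (ζv, ζ⁻¹w). -/
theorem outer_map_injective_on_stable (n : ℕ) (hn : 3 ≤ n)
    (v w v' w' : Fin n → ℂ) (hv : v ≠ 0) (hw : w ≠ 0)
    (h : ∀ i j : Fin n,
      v i * w j - (1 / (n : ℂ)) * (∑ k, v k * w k) * (if i = j then 1 else 0) =
      v' i * w' j - (1 / (n : ℂ)) * (∑ k, v' k * w' k) * (if i = j then 1 else 0)) :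
    ∃ ζ : ℂ, ζ ≠ 0 ∧ v' = ζ • v ∧ w' = ζ⁻¹ • w := by
  have hnC : (n : ℂ) ≠ 0 := Nat.cast_ne_zero.mpr (by omega)
  obtain ⟨i0, hvi0⟩ := Function.ne_iff.mp hv
  obtain ⟨j0, hwj0'⟩ := Function.ne_iff.mp hw
  simp only [Pi.zero_apply] at hvi0 hwj0'
  by_cases hij : i0 = j0
  case neg => exact aux_main hn v w v' w' h i0 j0 hij hvi0 hwj0'
  have hwj0 : w i0 ≠ 0 := hij ▸ hwj0'
  clear hwj0' hij
  by_cases hV : ∃ k, k ≠ i0 ∧ v k ≠ 0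
  · obtain ⟨k, hk, hvk⟩ := hV
    exact aux_main hn v w v' w' h k i0 hk hvk hwj0
  by_cases hW : ∃ k, k ≠ i0 ∧ w k ≠ 0
  · obtain ⟨k, hk, hwk⟩ := hW
    exact aux_main hn v w v' w' h i0 k (fun e => hk e.symm) hvi0 hwk
  push_neg at hV hW
  -- degenerate case: v, w supported only at i0
  set S := ∑ k, v k * w k with hS
  set S' := ∑ k, v' k * w' k with hS'
  have hoff : ∀ i j : Fin n, i ≠ j → v' i * w' j = 0 := by
    intro i j hij'
    have e := h i j
    simp only [if_neg hij', mul_zero, sub_zero] at e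
    rcases eq_or_ne i i0 with rfl | hi
    · rw [← e, hW j (fun h => hij' h.symm), mul_zero]
    · rw [← e, hV i hi, zero_mul]
  have hdiag : ∀ i : Fin n, v i * w i - (1 / (n : ℂ)) * S = v' i * w' i - (1 / (n : ℂ)) * S' := by
    intro i
    simpa using h i i
  have hv' : ∀ i, i ≠ i0 → v' i = 0 := by
    intro i hi
    by_contra hvi
    have hw'j : ∀ j, j ≠ i → w' j = 0 := by
      intro j hj
      exact (mul_eq_zero.mp (hoff i j (fun e => hj e.symm))).resolve_left hvi
    obtain ⟨m, hmi0, hmi⟩ := aux_third hn i0 i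
    have e := hdiag m
    rw [hV m hmi0, hw'j m hmi, zero_mul, mul_zero] at e
    have hSS : S = S' := by
      have : (1 / (n : ℂ)) * S = (1 / (n : ℂ)) * S' := by linear_combination -e
      exact mul_left_cancel₀ (one_div_ne_zero hnC) this
    have e0 := hdiag i0
    rw [hSS, hw'j i0 hi.symm, mul_zero] at e0
    exact mul_ne_zero hvi0 hwj0 (by linear_combination e0)
  have hw' : ∀ j, j ≠ i0 → w' j = 0 := by
    intro j hj
    by_contra hwj
    have hv'i : ∀ i, i ≠ j → v' i = 0 := by
      intro i hi
      exact (mul_eq_zero.mp (hoff i j hi)).resolve_right hwj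
    obtain ⟨m, hmi0, hmj⟩ := aux_third hn i0 j
    have e := hdiag m
    rw [hV m hmi0, hv'i m hmj, zero_mul, zero_mul] at e
    have hSS : S = S' := by
      have : (1 / (n : ℂ)) * S = (1 / (n : ℂ)) * S' := by linear_combination -e
      exact mul_left_cancel₀ (one_div_ne_zero hnC) this
    have e0 := hdiag i0
    rw [hSS, hv'i i0 hj.symm, zero_mul] at e0
    exact mul_ne_zero hvi0 hwj0 (by linear_combination e0)
  obtain ⟨m, hmi0, _⟩ := aux_third hn i0 i0
  have e := hdiag m
  rw [hV m hmi0, hv' m hmi0, zero_mul, zero_mul] at e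
  have hSS : S = S' := by
    have : (1 / (n : ℂ)) * S = (1 / (n : ℂ)) * S' := by linear_combination -e
    exact mul_left_cancel₀ (one_div_ne_zero hnC) this
  have e0 := hdiag i0
  rw [hSS] at e0
  have hkey : v i0 * w i0 = v' i0 * w' i0 := by linear_combination e0
  have hv'0 : v' i0 ≠ 0 := left_ne_zero_of_mul (hkey ▸ mul_ne_zero hvi0 hwj0)
  set ζ := v' i0 / v i0 with hζ
  have hζ0 : ζ ≠ 0 := div_ne_zero hv'0 hvi0
  have hζv : ζ * v i0 = v' i0 := div_mul_cancel₀ (v' i0) hvi0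
  have hw'i0 : w' i0 = ζ⁻¹ * w i0 := by
    have e2 : v i0 * (ζ * w' i0) = v i0 * w i0 := by
      calc v i0 * (ζ * w' i0) = (ζ * v i0) * w' i0 := by ring
        _ = v' i0 * w' i0 := by rw [hζv]
        _ = v i0 * w i0 := hkey.symm
    have h3 := mul_left_cancel₀ hvi0 e2
    rw [← h3, inv_mul_cancel_left₀ hζ0]
  refine ⟨ζ, hζ0, funext fun i => ?_, funext fun j => ?_⟩
  · rcases eq_or_ne i i0 with rfl | hi
    · simpa using hζv.symm
    · simp [hv' i hi, hV i hi]
  · rcases eq_or_ne j i0 with rfl | hj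
    · simpa using hw'i0
    · simp [hw' j hj, hW j hj]
end

section
/- Let n ≥ 1, let A be an n×n complex matrix, and let t ∈ ℂ with rank(A − t·I) ≤ 1. Then there exist a unitary matrix U ∈ U(n) and a matrix S ∈ M_n(ℂ) with rank(S) ≤ 1 such that A = S + t·U E₁ U^{−1}, where E₁ = diag(1, …, 1, 1−n) is the n×n diagonal matrix with first n−1 diagonal entries 1 and last diagonal entry 1−n. -/
/-!
Conjugating `E₁ = 1 - n • e e*` (with `e` the last standard basis vector) by a unitary `U` gives
`1 - n • u u*`, where `u` is the last column of `U`. Hence `S := A - t • U E₁ U⁻¹` equals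
`(A - t • 1) + t n • u u*`. Since `A - t • 1` has rank at most one, its range lies on a line, and
choosing `U` with last column a unit vector spanning that line puts the range of `S` on the same
line.
-/

open Matrix

theorem exists_norm_eq_one_mem_span_singleton {𝕜 E : Type*} [RCLike 𝕜] [NormedAddCommGroup E]
    [InnerProductSpace 𝕜 E] [Nontrivial E] (v : E) : ∃ u : E, ‖u‖ = 1 ∧ v ∈ 𝕜 ∙ u := by
  obtain ⟨w, hw, hvw⟩ : ∃ w : E, w ≠ 0 ∧ v ∈ 𝕜 ∙ w := by
    by_cases hv : v = 0
    · obtain ⟨w, hw⟩ := exists_ne (0 : E)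
      exact ⟨w, hw, hv ▸ Submodule.zero_mem _⟩
    · exact ⟨v, hv, Submodule.mem_span_singleton_self v⟩
  refine ⟨(‖w‖⁻¹ : 𝕜) • w, norm_smul_inv_norm hw, ?_⟩
  rwa [Submodule.span_singleton_smul_eq (by simpa using hw)]

namespace Matrix

variable {m n K : Type*} [Fintype n] [Field K]

theorem rank_le_one_iff_exists_range_le_span_singleton (M : Matrix m n K) :
    M.rank ≤ 1 ↔ ∃ u, LinearMap.range M.mulVecLin ≤ K ∙ u := by
  rw [← rank_submodule_le_one_iff', ← Module.finrank_eq_rank]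
  exact_mod_cast Iff.rfl

theorem range_mulVecLin_vecMulVec_le (u : m → K) (w : n → K) :
    LinearMap.range (vecMulVec u w).mulVecLin ≤ K ∙ u := by
  rintro _ ⟨x, rfl⟩
  simpa [vecMulVec_mulVec] using
    Submodule.smul_mem _ (w ⬝ᵥ x) (Submodule.mem_span_singleton_self u)

theorem rank_add_vecMulVec_le_one {M : Matrix m n K} {u : m → K}
    (hM : LinearMap.range M.mulVecLin ≤ K ∙ u) (w : n → K) :
    (M + vecMulVec u w).rank ≤ 1 := by
  rw [rank_le_one_iff_exists_range_le_span_singleton, mulVecLin_add]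
  exact ⟨u, (LinearMap.range_add_le _ _).trans (sup_le hM (range_mulVecLin_vecMulVec_le _ _))⟩

variable {𝕜 ι : Type*} [RCLike 𝕜] [Fintype ι] [DecidableEq ι]

theorem exists_mem_unitaryGroup_col_eq (u : EuclideanSpace 𝕜 ι) (hu : ‖u‖ = 1) (j : ι) :
    ∃ U ∈ unitaryGroup ι 𝕜, U.col j = u := by
  have hj : Orthonormal 𝕜 (({j} : Set ι).domRestrict fun _ => u) := by
    rw [orthonormal_iff_ite]
    rintro ⟨i, rfl⟩ ⟨k, rfl⟩
    simp [Set.domRestrict, inner_self_eq_norm_sq_to_K, hu]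
  obtain ⟨b, hb⟩ := hj.exists_orthonormalBasis_extension_of_card_eq (by simp)
  refine ⟨(EuclideanSpace.basisFun ι 𝕜).toBasis.toMatrix b,
    (EuclideanSpace.basisFun ι 𝕜).toMatrix_orthonormalBasis_mem_unitary b, ?_⟩
  ext i
  simp [Module.Basis.toMatrix_apply, hb j rfl]

theorem exists_mem_unitaryGroup_mem_span_col (v : ι → 𝕜) (j : ι) :
    ∃ U ∈ unitaryGroup ι 𝕜, v ∈ 𝕜 ∙ U.col j := by
  have : Nontrivial (EuclideanSpace 𝕜 ι) := ⟨EuclideanSpace.single j 1, 0, by simp⟩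
  obtain ⟨u, hu, huv⟩ := exists_norm_eq_one_mem_span_singleton (𝕜 := 𝕜) (WithLp.toLp 2 v)
  obtain ⟨a, hau⟩ := Submodule.mem_span_singleton.1 huv
  obtain ⟨U, hU, hUu⟩ := exists_mem_unitaryGroup_col_eq u hu j
  refine ⟨U, hU, Submodule.mem_span_singleton.2 ⟨a, ?_⟩⟩
  rw [hUu, ← WithLp.ofLp_smul, hau]

theorem mul_diagonal_ite_mul_inv {R : Type*} [CommRing R] [StarRing R] {U : Matrix ι ι R}
    (hU : U ∈ unitaryGroup ι R) (j : ι) (c : R) :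
    U * diagonal (fun i => if i = j then 1 - c else 1) * U⁻¹
      = 1 - c • vecMulVec (U.col j) (star (U.col j)) := by
  have hdiag : diagonal (fun i => if i = j then 1 - c else 1)
      = 1 - c • diagonal (Pi.single j 1) := by
    rw [← diagonal_one, ← diagonal_smul, diagonal_sub]
    congr 1
    funext i
    by_cases hi : i = j <;> simp [hi]
  have hproj : U * diagonal (Pi.single j 1) * star U = vecMulVec (U.col j) (star (U.col j)) := by
    ext i k
    simp [mul_apply, diagonal, Pi.single_apply, vecMulVec]
  rw [inv_eq_left_inv (mem_unitaryGroup_iff'.1 hU), hdiag, mul_sub, sub_mul, mul_one,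
    mem_unitaryGroup_iff.1 hU, mul_smul_comm, smul_mul_assoc, hproj]

end Matrix

/-- Any n×n complex matrix A with rank(A − t·I) ≤ 1 decomposes as
A = S + t·U E₁ U⁻¹ with S of rank at most one, U unitary, and
E₁ = diag(1, …, 1, 1−n). -/
theorem decomposition_rank_one_plus_conjugate (n : ℕ) (hn : 1 ≤ n)
    (A : Matrix (Fin n) (Fin n) ℂ) (t : ℂ)
    (h : (A - t • (1 : Matrix (Fin n) (Fin n) ℂ)).rank ≤ 1) :
    ∃ U ∈ Matrix.unitaryGroup (Fin n) ℂ, ∃ S : Matrix (Fin n) (Fin n) ℂ,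
      S.rank ≤ 1 ∧
      A = S + t • (U * Matrix.diagonal
        (fun i : Fin n => if (i : ℕ) = n - 1 then 1 - (n : ℂ) else 1) * U⁻¹) := by
  let last : Fin n := ⟨n - 1, by omega⟩
  obtain ⟨v, hv⟩ := (rank_le_one_iff_exists_range_le_span_singleton _).1 h
  obtain ⟨U, hU, hvU⟩ := exists_mem_unitaryGroup_mem_span_col v last
  have hE : (fun i : Fin n => if (i : ℕ) = n - 1 then 1 - (n : ℂ) else 1)
      = fun i => if i = last then 1 - (n : ℂ) else 1 := by
    simp [last, Fin.ext_iff]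
  have hrange : LinearMap.range (A - t • 1).mulVecLin ≤ ℂ ∙ U.col last :=
    hv.trans (Submodule.span_singleton_le_iff_mem _ _ |>.2 hvU)
  refine ⟨U, hU, _, rank_add_vecMulVec_le_one hrange ((t * n) • star (U.col last)), ?_⟩
  rw [hE, mul_diagonal_ite_mul_inv hU, vecMulVec_smul]
  module
end

section
/- Let n ≥ 1, let d, α ∈ ℂ, and let A_red = (a_{ij}) be an n×n complex matrix with rank(A_red) ≤ 1. Let A be the (n+1)×(n+1) complex matrix defined by: A_{1,1} = d+α, A_{1,2} = 1, A_{1,j} = 0 for 3 ≤ j ≤ n+1; A_{2,1} = a_{11}+α², A_{2,2} = d+α, A_{2,j+1} = a_{1j} for 2 ≤ j ≤ n; and for 2 ≤ i ≤ n: A_{i+1,1} = a_{i1}, A_{i+1,2} = 0, and A_{i+1,j+1} = a_{ij} + d·δ_{ij} for 2 ≤ j ≤ n. Set s = a_{22} + a_{33} + ⋯ + a_{nn} and assume 2α + s = −(n+1)d. Then the characteristic polynomial of A equals (X − d)^{n−1} · ( (X − d)² + (n+1)d·(X − d) − a_{11} − (n+1)d·s − s² ). In particular, the two eigenvalues d+z₁,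 d+z₂ of A other than the (n−1)-fold eigenvalue d satisfy z₁ + z₂ = −(n+1)d and z₁ z₂ = −a_{11} − (n+1)d·s − s². -/
/-!
Writing `A_red = u vᵀ`, the slice element is a rank-two perturbation of the scalar matrix:
`A = d • 1 + w₁ v₁ᵀ + w₂ v₂ᵀ`. For `U = [w₁ w₂]` and `W = [v₁ v₂]ᵀ`, the characteristic
polynomials of `U W` and of the `2 × 2` matrix `W U` differ only by a factor `X ^ (n - 1)`, so
`χ_A` is `(X - d) ^ (n - 1)` times the shifted characteristic polynomial of `W U`, whose trace is
`s + 2α = -(n + 1) d` and whose determinant is `2α s - a₁₁`.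
-/

open Matrix Polynomial

namespace Matrix

theorem exists_eq_vecMulVec_of_rank_le_one {K : Type*} [Field K] {m n : Type*} [Fintype m]
    [Fintype n] [DecidableEq n] (A : Matrix m n K) (hA : A.rank ≤ 1) : ∃ u v, A = vecMulVec u v := by
  obtain ⟨g, hg⟩ := ((Submodule.finrank_le_one_iff_isPrincipal _).mp hA).principal
  have hcol (j : n) : ∃ c : K, c • g = A *ᵥ Pi.single j 1 := by
    rw [← Submodule.mem_span_singleton, ← hg]
    exact ⟨Pi.single j 1, rfl⟩
  choose c hc using hcol
  refine ⟨g, c, ext fun i j => ?_⟩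
  simpa [vecMulVec_apply, mul_comm] using (congrFun (hc j) i).symm

variable {R : Type*} [CommRing R] {m k : Type*} [Fintype m] [DecidableEq m]
  [Fintype k] [DecidableEq k]

theorem charpoly_scalar_add_mul (d : R) (U : Matrix m k R) (W : Matrix k m R)
    (h : Fintype.card k ≤ Fintype.card m) :
    (scalar m d + U * W).charpoly =
      (X - C d) ^ (Fintype.card m - Fintype.card k) * (W * U).charpoly.comp (X - C d) := by
  have hshift := charpoly_sub_scalar (scalar m d + U * W) d
  rw [add_sub_cancel_left, charpoly_mul_comm_of_le U W h] at hshift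
  have hcomp := congrArg (·.comp (X - C d)) hshift
  simpa only [mul_comp, pow_comp, X_comp, comp_assoc, add_comp, C_comp, sub_add_cancel, comp_X]
    using hcomp.symm

theorem charpoly_scalar_add_vecMulVec_add_vecMulVec [Nontrivial R] (d : R)
    (w₁ v₁ w₂ v₂ : m → R) (h : 2 ≤ Fintype.card m) :
    (scalar m d + vecMulVec w₁ v₁ + vecMulVec w₂ v₂).charpoly =
      (X - C d) ^ (Fintype.card m - 2) *
        ((X - C d) ^ 2 - C (v₁ ⬝ᵥ w₁ + v₂ ⬝ᵥ w₂) * (X - C d) +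
          C (v₁ ⬝ᵥ w₁ * (v₂ ⬝ᵥ w₂) - v₁ ⬝ᵥ w₂ * (v₂ ⬝ᵥ w₁))) := by
  have hUW : vecMulVec w₁ v₁ + vecMulVec w₂ v₂ = (of ![w₁, w₂])ᵀ * of ![v₁, v₂] := by
    ext i j
    simp [mul_apply, Fin.sum_univ_two, vecMulVec_apply]
  have hWU : of ![v₁, v₂] * (of ![w₁, w₂])ᵀ = !![v₁ ⬝ᵥ w₁, v₁ ⬝ᵥ w₂; v₂ ⬝ᵥ w₁, v₂ ⬝ᵥ w₂] := by
    ext i j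
    fin_cases i <;> fin_cases j <;> rfl
  rw [add_assoc, hUW, charpoly_scalar_add_mul _ _ _ (by simpa using h), hWU, charpoly_fin_two]
  simp [trace_fin_two, det_fin_two]

end Matrix

theorem IsAlgClosed.exists_add_eq_and_mul_eq {K : Type*} [Field K] [IsAlgClosed K] (p q : K) :
    ∃ z₁ z₂ : K, z₁ + z₂ = p ∧ z₁ * z₂ = q := by
  have hdeg : (X ^ 2 - C p * X + C q).degree = 2 := by compute_degree!
  obtain ⟨z, hz⟩ := IsAlgClosed.exists_root _ (hdeg ▸ two_ne_zero)
  refine ⟨z, p - z, by ring, ?_⟩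
  simp only [IsRoot, eval_add, eval_sub, eval_mul, eval_pow, eval_X, eval_C] at hz
  linear_combination -hz

theorem Fin.sum_filter_one_le_val {M : Type*} [AddCommMonoid M] {m : ℕ} (f : Fin (m + 1) → M) :
    ∑ i ∈ Finset.univ.filter (fun i : Fin (m + 1) => 1 ≤ (i : ℕ)), f i = ∑ i : Fin m, f i.succ := by
  rw [Finset.sum_filter, Fin.sum_univ_succ]
  simp

section SliceMatrix

variable {R : Type*} [CommRing R] {m : ℕ}

/-- The element `d • 1 + (sjmm2)` of `𝒳_{m+1,d}` whose reduced matrix is `vecMulVec u v`. -/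
def sliceMatrix (d α : R) (u v : Fin (m + 1) → R) : Matrix (Fin (m + 2)) (Fin (m + 2)) R :=
  scalar _ d + vecMulVec (vecCons 0 u) (vecCons (v 0) (vecCons 0 (vecTail v))) +
    vecMulVec (vecCons 1 (vecCons α 0)) (vecCons α (vecCons 1 0))

theorem eq_sliceMatrix {d α : R} {u v : Fin (m + 1) → R} {A : Matrix (Fin (m + 2)) (Fin (m + 2)) R}
    (h00 : A 0 0 = d + α) (h01 : A 0 1 = 1) (h0j : ∀ j : Fin m, A 0 j.succ.succ = 0)
    (h10 : A 1 0 = u 0 * v 0 + α ^ 2) (h11 : A 1 1 = d + α)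
    (h1j : ∀ j : Fin m, A 1 j.succ.succ = u 0 * v j.succ)
    (hi0 : ∀ i : Fin m, A i.succ.succ 0 = u i.succ * v 0)
    (hi1 : ∀ i : Fin m, A i.succ.succ 1 = 0)
    (hij : ∀ i j : Fin m,
      A i.succ.succ j.succ.succ = u i.succ * v j.succ + if i = j then d else 0) :
    A = sliceMatrix d α u v := by
  ext i j
  refine Fin.cases ?_ (Fin.cases ?_ fun i => ?_) i <;>
    refine Fin.cases ?_ (Fin.cases ?_ fun j => ?_) j <;>
    simp [sliceMatrix, *, diagonal_apply, vecTail, Fin.ext_iff] <;> ring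

theorem charpoly_sliceMatrix [Nontrivial R] {d α s N : R} {u v : Fin (m + 1) → R}
    (hs : s = ∑ i : Fin m, u i.succ * v i.succ) (htr : 2 * α + s = -N * d) :
    (sliceMatrix d α u v).charpoly =
      (X - C d) ^ m *
        ((X - C d) ^ 2 + C (N * d) * (X - C d) - C (u 0 * v 0 + N * d * s + s ^ 2)) := by
  have h11 : vecCons (v 0) (vecCons 0 (vecTail v)) ⬝ᵥ vecCons 0 u = s := by
    simp [hs, Fin.sum_univ_succ, dotProduct, vecTail, mul_comm]
  have h12 : vecCons (v 0) (vecCons 0 (vecTail v)) ⬝ᵥ vecCons 1 (vecCons α 0) = v 0 := by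
    simp
  have h21 : vecCons α (vecCons 1 0) ⬝ᵥ vecCons 0 u = u 0 := by
    simp [vecHead]
  have h22 : vecCons α (vecCons 1 (0 : Fin m → R)) ⬝ᵥ vecCons 1 (vecCons α 0) = 2 * α := by
    simp only [cons_dotProduct_cons, dotProduct_zero]
    ring
  rw [sliceMatrix, charpoly_scalar_add_vecMulVec_add_vecMulVec _ _ _ _ _ (by simp), h11, h12,
    h21, h22, Fintype.card_fin, Nat.add_sub_cancel, show s + 2 * α = -(N * d) by
      linear_combination htr,
    show s * (2 * α) - v 0 * u 0 = -(u 0 * v 0 + N * d * s + s ^ 2) by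
      linear_combination s * htr]
  simp only [C_neg]
  ring

end SliceMatrix

/-- For the element A of 𝒳_{n,d} (the Jacobson–Morozov slice element with
reduced matrix A_red of rank ≤ 1, with trace-zero relation 2α + s = −(n+1)d
where s = a_{22} + ⋯ + a_{nn}), the characteristic polynomial of A is
(X−d)^{n−1}·((X−d)² + (n+1)d(X−d) − a₁₁ − (n+1)ds − s²); in particular the two
remaining eigenvalues d+z₁, d+z₂ satisfy z₁+z₂ = −(n+1)d and
z₁z₂ = −a₁₁ − (n+1)ds − s². -/
theorem slice_charpoly (n : ℕ) (hn : 1 ≤ n) (d α : ℂ)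
    (a : Matrix (Fin n) (Fin n) ℂ) (ha : a.rank ≤ 1)
    (A : Matrix (Fin (n + 1)) (Fin (n + 1)) ℂ)
    (h00 : A ⟨0, by omega⟩ ⟨0, by omega⟩ = d + α)
    (h01 : A ⟨0, by omega⟩ ⟨1, by omega⟩ = 1)
    (h0j : ∀ j : Fin (n + 1), 2 ≤ (j : ℕ) → A ⟨0, by omega⟩ j = 0)
    (h10 : A ⟨1, by omega⟩ ⟨0, by omega⟩ = a ⟨0, by omega⟩ ⟨0, by omega⟩ + α ^ 2)
    (h11 : A ⟨1, by omega⟩ ⟨1, by omega⟩ = d + α)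
    (h1j : ∀ j : Fin n, 1 ≤ (j : ℕ) → A ⟨1, by omega⟩ j.succ = a ⟨0, by omega⟩ j)
    (hi0 : ∀ i : Fin n, 1 ≤ (i : ℕ) → A i.succ ⟨0, by omega⟩ = a i ⟨0, by omega⟩)
    (hi1 : ∀ i : Fin n, 1 ≤ (i : ℕ) → A i.succ ⟨1, by omega⟩ = 0)
    (hij : ∀ i j : Fin n, 1 ≤ (i : ℕ) → 1 ≤ (j : ℕ) →
      A i.succ j.succ = a i j + (if i = j then d else 0))
    (s : ℂ)
    (hs : s = ∑ i ∈ Finset.univ.filter (fun i : Fin n => 1 ≤ (i : ℕ)), a i i)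
    (htr : 2 * α + s = -((n : ℂ) + 1) * d) :
    A.charpoly =
        (X - C d) ^ (n - 1) *
          ((X - C d) ^ 2 + C (((n : ℂ) + 1) * d) * (X - C d)
            - C (a ⟨0, by omega⟩ ⟨0, by omega⟩ + ((n : ℂ) + 1) * d * s + s ^ 2)) ∧
      ∃ z₁ z₂ : ℂ,
        z₁ + z₂ = -((n : ℂ) + 1) * d ∧
        z₁ * z₂ = -(a ⟨0, by omega⟩ ⟨0, by omega⟩) - ((n : ℂ) + 1) * d * s - s ^ 2 ∧
        A.charpoly = (X - C d) ^ (n - 1) *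
          (X - C (d + z₁)) * (X - C (d + z₂)) := by
  obtain ⟨m, rfl⟩ : ∃ m, n = m + 1 := ⟨n - 1, by omega⟩
  obtain ⟨u, v, rfl⟩ := a.exists_eq_vecMulVec_of_rank_le_one ha
  simp only [Fin.zero_eta, Fin.mk_one, vecMulVec_apply] at *
  rw [Fin.sum_filter_one_le_val] at hs
  have hA : A = sliceMatrix d α u v := eq_sliceMatrix h00 h01 (fun j => h0j _ (by simp)) h10 h11
    (fun j => h1j _ (by simp)) (fun i => hi0 _ (by simp)) (fun i => hi1 _ (by simp))
    (fun i j => by simpa using hij i.succ j.succ (by simp) (by simp))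
  have hchar := hA ▸ charpoly_sliceMatrix hs htr
  obtain ⟨z₁, z₂, hsum, hprod⟩ := IsAlgClosed.exists_add_eq_and_mul_eq
    (-((↑(m + 1) + 1) * d)) (-(u 0 * v 0) - (↑(m + 1) + 1) * d * s - s ^ 2)
  refine ⟨hchar, z₁, z₂, by linear_combination hsum, hprod, ?_⟩
  rw [hchar, mul_assoc _ (X - C (d + z₁))]
  congr 1
  rw [show (↑(m + 1) + 1) * d = -(z₁ + z₂) by linear_combination hsum,
    show u 0 * v 0 + -(z₁ + z₂) * s + s ^ 2 = -(z₁ * z₂) by linear_combination hprod - s * hsum]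
  simp only [C_neg, C_add, C_mul]
  ring
end

section
/- Let m ≥ 1 and n ≥ 2, and let N = mn. Let π be the partition of N with m parts equal to 1 and m parts equal to n−1, and let σ be the ordered tuple (n, n−1, …, n−1, 1, …, 1) consisting of one part n, followed by m−1 parts n−1, followed by m−1 parts 1. Then there is exactly one breaking of π according to σ: the part n breaks as the partition {n−1, 1}, and every other part of σ breaks trivially (as the one-part partition of itself). -/
/-- `b` is a breaking of the partition `π` (a multiset of positive integers)
according to the ordered tuple `σ`: each `b i` is a partition of `σ i`, and
the multiset union of all the parts of the `b i` equals `π`. -/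
def IsBreaking {l : ℕ} (σ : Fin l → ℕ) (π : Multiset ℕ) (b : Fin l → Multiset ℕ) : Prop :=
  (∀ i, (∀ x ∈ b i, 0 < x) ∧ (b i).sum = σ i) ∧ (∑ i, b i) = π

lemma cardSum {α : Type*} (s : Finset α) (f : α → Multiset ℕ) :
    Multiset.card (∑ i ∈ s, f i) = ∑ i ∈ s, Multiset.card (f i) := by
  induction s using Finset.cons_induction with
  | empty => simp
  | cons a s ha ih => simp [Finset.sum_cons, Multiset.card_add, ih]

lemma sumIcoConst (a b c : ℕ) (f : ℕ → Multiset ℕ) (h : ∀ j ∈ Finset.Ico a b, f j = {c}) :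
    ∑ j ∈ Finset.Ico a b, f j = Multiset.replicate (b - a) c := by
  rw [Finset.sum_congr rfl h, Finset.sum_const, Nat.card_Ico]
  simp [Multiset.nsmul_singleton]

lemma canonicalSum (m n : ℕ) (hm : 1 ≤ m) :
    (∑ i : Fin (2 * m - 1),
        (if (i : ℕ) = 0 then ({n - 1, 1} : Multiset ℕ)
         else if (i : ℕ) ≤ m - 1 then {n - 1} else {1})) =
      Multiset.replicate m 1 + Multiset.replicate m (n - 1) := by
  rw [Fin.sum_univ_eq_sum_range
      (fun j => if j = 0 then ({n - 1, 1} : Multiset ℕ) else if j ≤ m - 1 then {n - 1} else {1})]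
  rw [Finset.range_eq_Ico,
    ← Finset.sum_Ico_consecutive _ (Nat.zero_le m) (by omega : m ≤ 2 * m - 1),
    Finset.sum_eq_sum_Ico_succ_bot (by omega : 0 < m)]
  rw [sumIcoConst 1 m (n - 1) _ (fun j hj => by
        simp only [Finset.mem_Ico] at hj
        rw [if_neg (by omega), if_pos (by omega)]),
      sumIcoConst m (2 * m - 1) 1 _ (fun j hj => by
        simp only [Finset.mem_Ico] at hj
        rw [if_neg (by omega), if_neg (by omega)])]
  rw [if_pos rfl]
  have h1 : Multiset.replicate m 1 = Multiset.replicate (1 + (m - 1)) 1 := by congr 1; omega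
  have h2 : Multiset.replicate m (n - 1) = Multiset.replicate (1 + (m - 1)) (n - 1) := by
    congr 1; omega
  have h3 : 2 * m - 1 - m = m - 1 := by omega
  rw [h1, h2, h3, Multiset.replicate_add, Multiset.replicate_add]
  simp only [Multiset.replicate_one, Multiset.insert_eq_cons]
  rw [show ((n-1) ::ₘ {1} : Multiset ℕ) = {n-1} + {1} by rfl]
  abel

/-- For π = (1^m (n−1)^m) and σ = (n, (n−1)^{m−1}, 1^{m−1}) there is exactly
one breaking of π according to σ: the part n breaks as {n−1, 1} and every
other part breaks trivially. -/
theorem unique_breaking_thick_thin (m n : ℕ) (hm : 1 ≤ m) (hn : 2 ≤ n) :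
    IsBreaking
        (fun i : Fin (2 * m - 1) =>
          if (i : ℕ) = 0 then n else if (i : ℕ) ≤ m - 1 then n - 1 else 1)
        (Multiset.replicate m 1 + Multiset.replicate m (n - 1))
        (fun i : Fin (2 * m - 1) =>
          if (i : ℕ) = 0 then {n - 1, 1} else if (i : ℕ) ≤ m - 1 then {n - 1} else {1}) ∧
      ∀ b : Fin (2 * m - 1) → Multiset ℕ,
        IsBreaking
            (fun i : Fin (2 * m - 1) =>
              if (i : ℕ) = 0 then n else if (i : ℕ) ≤ m - 1 then n - 1 else 1)
            (Multiset.replicate m 1 + Multiset.replicate m (n - 1)) b →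
          b = fun i : Fin (2 * m - 1) =>
            if (i : ℕ) = 0 then {n - 1, 1} else if (i : ℕ) ≤ m - 1 then {n - 1} else {1} := by
  set σ : Fin (2 * m - 1) → ℕ := fun i =>
    if (i : ℕ) = 0 then n else if (i : ℕ) ≤ m - 1 then n - 1 else 1 with hσ
  set g : Fin (2 * m - 1) → Multiset ℕ := fun i =>
    if (i : ℕ) = 0 then {n - 1, 1} else if (i : ℕ) ≤ m - 1 then {n - 1} else {1} with hg
  have hgsum : (∑ i, g i) = Multiset.replicate m 1 + Multiset.replicate m (n - 1) :=
    canonicalSum m n hm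
  constructor
  · refine ⟨fun i => ?_, hgsum⟩
    simp only [hg, hσ]
    split_ifs with h1 h2
    · constructor
      · intro x hx
        simp only [Multiset.insert_eq_cons, Multiset.mem_cons, Multiset.mem_singleton] at hx
        rcases hx with rfl | rfl <;> omega
      · simp only [Multiset.insert_eq_cons, Multiset.sum_cons, Multiset.sum_singleton]
        omega
    · exact ⟨fun x hx => by simp at hx; omega, by simp⟩
    · exact ⟨fun x hx => by simp at hx; omega, by simp⟩
  · intro b hb
    obtain ⟨hparts, hsum⟩ := hb
    have hl : 0 < 2 * m - 1 := by omega
    set i0 : Fin (2 * m - 1) := ⟨0, hl⟩ with hi0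
    have hcardπ : Multiset.card (Multiset.replicate m 1 + Multiset.replicate m (n - 1)) = 2 * m := by
      rw [Multiset.card_add, Multiset.card_replicate, Multiset.card_replicate]; omega
    have hcardsum : ∑ i, Multiset.card (b i) = 2 * m := by
      rw [← cardSum, hsum, hcardπ]
    have hpos : ∀ i, 1 ≤ Multiset.card (b i) := by
      intro i
      obtain ⟨hp, hs⟩ := hparts i
      by_contra h
      have hz : b i = 0 := Multiset.card_eq_zero.mp (by omega)
      rw [hz, Multiset.sum_zero] at hs
      simp only [hσ] at hs
      split_ifs at hs <;> omega
    have hn_notin : n ∉ (Multiset.replicate m 1 + Multiset.replicate m (n - 1)) := by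
      simp only [Multiset.mem_add, Multiset.mem_replicate]
      omega
    have hb0 : 2 ≤ Multiset.card (b i0) := by
      obtain ⟨hp, hs⟩ := hparts i0
      by_contra h
      have h1 : Multiset.card (b i0) = 1 := le_antisymm (by omega) (hpos i0)
      obtain ⟨x, hx⟩ := Multiset.card_eq_one.mp h1
      have hxn : x = n := by
        rw [hx, Multiset.sum_singleton] at hs
        simpa [hσ, hi0] using hs
      have hmem : n ∈ ∑ i, b i :=
        Multiset.mem_sum.mpr ⟨i0, Finset.mem_univ _, by rw [hx, hxn]; simp⟩
      rw [hsum] at hmem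
      exact hn_notin hmem
    have hone : ∀ i, i ≠ i0 → Multiset.card (b i) = 1 := by
      intro i1 hne
      by_contra h
      have h2 : 2 ≤ Multiset.card (b i1) := by have := hpos i1; omega
      have hmem1 : i1 ∈ Finset.univ.erase i0 := Finset.mem_erase.mpr ⟨hne, Finset.mem_univ _⟩
      have e1 : Multiset.card (b i0) + ∑ i ∈ Finset.univ.erase i0, Multiset.card (b i)
          = ∑ i, Multiset.card (b i) := by
        simpa using Finset.add_sum_erase Finset.univ (fun i => Multiset.card (b i))
          (Finset.mem_univ i0)
      have e2 : Multiset.card (b i1) + ∑ i ∈ (Finset.univ.erase i0).erase i1, Multiset.card (b i)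
          = ∑ i ∈ Finset.univ.erase i0, Multiset.card (b i) := by
        simpa using Finset.add_sum_erase (Finset.univ.erase i0) (fun i => Multiset.card (b i))
          hmem1
      have hrest : ((Finset.univ.erase i0).erase i1).card
          ≤ ∑ i ∈ (Finset.univ.erase i0).erase i1, Multiset.card (b i) := by
        have := Finset.card_nsmul_le_sum ((Finset.univ.erase i0).erase i1)
          (fun i => Multiset.card (b i)) 1 (fun x _ => hpos x)
        simpa using this
      have hcards : ((Finset.univ.erase i0).erase i1).card = 2 * m - 1 - 1 - 1 := by
        rw [Finset.card_erase_of_mem hmem1, Finset.card_erase_of_mem (Finset.mem_univ i0),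
          Finset.card_univ, Fintype.card_fin]
      omega
    have hbg : ∀ i, i ≠ i0 → b i = g i := by
      intro i hne
      obtain ⟨x, hx⟩ := Multiset.card_eq_one.mp (hone i hne)
      have hxs : x = σ i := by
        have := (hparts i).2
        rw [hx, Multiset.sum_singleton] at this
        exact this
      have hiv : (i : ℕ) ≠ 0 := fun hv => hne (Fin.ext hv)
      rw [hx, hxs]
      simp only [hσ, hg, if_neg hiv]
      split_ifs <;> rfl
    have hTeq : ∑ i ∈ Finset.univ.erase i0, b i = ∑ i ∈ Finset.univ.erase i0, g i :=
      Finset.sum_congr rfl (fun i hi => hbg i (Finset.mem_erase.mp hi).1)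
    have e3 : b i0 + ∑ i ∈ Finset.univ.erase i0, b i = ∑ i, b i := by
      simpa using Finset.add_sum_erase Finset.univ b (Finset.mem_univ i0)
    have e4 : g i0 + ∑ i ∈ Finset.univ.erase i0, g i = ∑ i, g i := by
      simpa using Finset.add_sum_erase Finset.univ g (Finset.mem_univ i0)
    have hT : b i0 + ∑ i ∈ Finset.univ.erase i0, g i
        = g i0 + ∑ i ∈ Finset.univ.erase i0, g i := by
      rw [e4, hgsum, ← hTeq, e3, hsum]
    have hb0g : b i0 = g i0 := add_right_cancel hT
    funext i
    by_cases h : i = i0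
    · rw [h]; exact hb0g
    · exact hbg i h
end

section
/- Let m ≥ 1 and n ≥ 3, and let N = mn. Let π be the partition of N with m+n−1 parts equal to 1 and m−1 parts equal to n−1, and let σ be the ordered tuple (n, n−1, …, n−1, 1, …, 1) consisting of one part n, followed by m−1 parts n−1, followed by m−1 parts 1. Then the number of breakings of π according to σ is exactly m: either the part n breaks as 1+1+⋯+1 and all other parts break trivially, or the part n breaks as {n−1, 1}, exactly one of the m−1 parts equal to n−1 breaks as 1+1+⋯+1, and the remaining parts break trivially. -/
/-- The tuple σ = (n, (n−1)^{m−1}, 1^{m−1}). -/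
def sigma15 (m n : ℕ) : Fin (2 * m - 1) → ℕ := fun i =>
  if (i : ℕ) = 0 then n else if (i : ℕ) ≤ m - 1 then n - 1 else 1

/-- The partition π = (1^{m+n−1} (n−1)^{m−1}). -/
def pi15 (m n : ℕ) : Multiset ℕ :=
  Multiset.replicate (m + n - 1) 1 + Multiset.replicate (m - 1) (n - 1)

/-- The breaking where n breaks as 1 + ⋯ + 1 and all other parts break
trivially. -/
def bA15 (m n : ℕ) : Fin (2 * m - 1) → Multiset ℕ := fun i =>
  if (i : ℕ) = 0 then Multiset.replicate n 1
  else if (i : ℕ) ≤ m - 1 then {n - 1} else {1}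

/-- The breaking where n breaks as {n−1, 1}, the part n−1 in position j breaks
as 1 + ⋯ + 1, and all other parts break trivially. -/
def bB15 (m n : ℕ) (j : Fin (2 * m - 1)) : Fin (2 * m - 1) → Multiset ℕ := fun i =>
  if (i : ℕ) = 0 then {n - 1, 1}
  else if i = j then Multiset.replicate (n - 1) 1
  else if (i : ℕ) ≤ m - 1 then {n - 1} else {1}

namespace Multiset

variable {α : Type*}

theorem sum_replicate_add_replicate {ι : Type*} (s : Finset ι) (a c : ι → ℕ) (x y : α) :
    ∑ i ∈ s, (replicate (a i) x + replicate (c i) y) =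
      replicate (∑ i ∈ s, a i) x + replicate (∑ i ∈ s, c i) y := by
  simp only [Finset.sum_add_distrib, ← replicateAddMonoidHom_apply, map_sum]

variable [DecidableEq α] {x y : α}

theorem eq_replicate_add_replicate_of_forall_mem {s : Multiset α} (hxy : x ≠ y)
    (h : ∀ z ∈ s, z = x ∨ z = y) :
    s = replicate (s.count x) x + replicate (s.count y) y := by
  ext z
  rw [count_add, count_replicate, count_replicate]
  by_cases hzx : x = z
  · subst hzx; simp [Ne.symm hxy]
  by_cases hzy : y = z
  · subst hzy; simp [hzx]
  · rw [if_neg hzx, if_neg hzy, count_eq_zero]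
    exact fun hz => (h z hz).elim (fun e => hzx e.symm) (fun e => hzy e.symm)

theorem count_replicate_add_replicate_left (hxy : x ≠ y) (a c : ℕ) :
    count x (replicate a x + replicate c y) = a := by
  simp [count_replicate, Ne.symm hxy]

theorem count_replicate_add_replicate_right (hxy : x ≠ y) (a c : ℕ) :
    count y (replicate a x + replicate c y) = c := by
  simp [count_replicate, hxy]

end Multiset

open Multiset

theorem isBreaking_replicate_add_replicate_iff {l : ℕ} (σ : Fin l → ℕ) {x y : ℕ} (hx : 0 < x)
    (hy : 0 < y) (hxy : x ≠ y) (p q : ℕ) (b : Fin l → Multiset ℕ) :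
    IsBreaking σ (replicate p x + replicate q y) b ↔
      ∃ a c : Fin l → ℕ, (∀ i, a i * x + c i * y = σ i) ∧ ∑ i, a i = p ∧ ∑ i, c i = q ∧
        b = fun i => replicate (a i) x + replicate (c i) y := by
  constructor
  · rintro ⟨hblock, hsum⟩
    have hmem : ∀ i, ∀ z ∈ b i, z = x ∨ z = y := fun i z hz => by
      have : z ∈ ∑ j, b j := mem_of_le (Finset.single_le_sum (by simp) (Finset.mem_univ i)) hz
      rw [hsum, mem_add] at this
      exact this.imp eq_of_mem_replicate eq_of_mem_replicate
    obtain ⟨a, c, rfl⟩ : ∃ a c : Fin l → ℕ, b = fun i => replicate (a i) x + replicate (c i) y :=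
      ⟨_, _, funext fun i => eq_replicate_add_replicate_of_forall_mem hxy (hmem i)⟩
    rw [sum_replicate_add_replicate] at hsum
    refine ⟨a, c, fun i => ?_, ?_, ?_, rfl⟩
    · simpa [sum_replicate] using (hblock i).2
    · simpa [count_replicate_add_replicate_left hxy] using congrArg (count x) hsum
    · simpa [count_replicate_add_replicate_right hxy] using congrArg (count y) hsum
  · rintro ⟨a, c, hσ, rfl, rfl, rfl⟩
    refine ⟨fun i => ⟨fun z hz => ?_, ?_⟩, sum_replicate_add_replicate ..⟩
    · rcases mem_add.1 hz with hz | hz <;> rw [eq_of_mem_replicate hz] <;> assumption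
    · simp [sum_replicate, ← hσ i]

theorem Finset.exists_mem_eq_indicator_erase_iff {ι : Type*} [Fintype ι] [DecidableEq ι]
    (s : Finset ι) (c : ι → ℕ) :
    ((∀ i, c i ≤ if i ∈ s then 1 else 0) ∧ ∑ i, c i + 1 = s.card) ↔
      ∃ j ∈ s, c = fun i => if i ∈ s.erase j then 1 else 0 := by
  constructor
  · rintro ⟨hle, hsum⟩
    set t : Finset ι := {i | c i = 1}
    have hc : c = fun i => if i ∈ t then 1 else 0 := funext fun i => by
      have := hle i
      simp only [t, Finset.mem_filter, Finset.mem_univ, true_and]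
      split_ifs at this ⊢ <;> omega
    have hts : t ⊆ s := fun i hi => by
      by_contra his
      have := hle i
      rw [if_neg his] at this
      simp only [t, Finset.mem_filter, Finset.mem_univ, true_and] at hi
      omega
    have hcard : (s \ t).card = 1 := by
      rw [Finset.card_sdiff_of_subset hts, ← hsum, hc, Finset.sum_boole]
      simp
    obtain ⟨j, hj⟩ := Finset.card_eq_one.1 hcard
    refine ⟨j, Finset.sdiff_subset (hj ▸ Finset.mem_singleton_self j), ?_⟩
    rw [← Finset.sdiff_singleton_eq_erase, ← hj, Finset.sdiff_sdiff_eq_self hts]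
    exact hc
  · rintro ⟨j, hj, rfl⟩
    refine ⟨fun i => ?_, ?_⟩
    · dsimp only
      split_ifs with hi hs
      exacts [le_rfl, absurd (Finset.mem_of_mem_erase hi) hs, zero_le_one, le_rfl]
    · rw [Finset.sum_boole, Finset.filter_mem_eq_inter, Finset.univ_inter, Nat.cast_id]
      exact Finset.card_erase_add_one hj

def bigPositions15 (m : ℕ) : Finset (Fin (2 * m - 1)) := {i | (i : ℕ) < m}

@[simp]
theorem mem_bigPositions15 {m : ℕ} {i : Fin (2 * m - 1)} : i ∈ bigPositions15 m ↔ (i : ℕ) < m := by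
  simp [bigPositions15]

theorem card_bigPositions15 (m : ℕ) : (bigPositions15 m).card = m := by
  rw [bigPositions15, Fin.card_filter_val_lt]
  omega

theorem sum_sigma15 {m n : ℕ} (hm : 1 ≤ m) (hn : 1 ≤ n) : ∑ i, sigma15 m n i = m * n := by
  obtain ⟨k, rfl⟩ := Nat.exists_eq_add_of_le' hm
  let g : ℕ → ℕ := fun j => if j = 0 then n else if j ≤ k + 1 - 1 then n - 1 else 1
  have hhead : ∑ j ∈ Finset.range (k + 1), g j = k * (n - 1) + n := by
    rw [Finset.sum_range_succ', Finset.sum_congr rfl fun j hj => by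
      simp only [g, Finset.mem_range] at hj ⊢; rw [if_neg j.succ_ne_zero, if_pos (by omega)]]
    simp [g]
  have htail : ∑ j ∈ Finset.Ico (k + 1) (2 * (k + 1) - 1), g j = k := by
    rw [Finset.sum_congr rfl fun j hj => by
      simp only [g, Finset.mem_Ico] at hj ⊢; rw [if_neg (by omega), if_neg (by omega)]]
    simp only [Finset.sum_const, Nat.card_Ico, smul_eq_mul, mul_one]
    omega
  calc ∑ i, sigma15 (k + 1) n i = ∑ j ∈ Finset.range (2 * (k + 1) - 1), g j :=
        Fin.sum_univ_eq_sum_range g _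
    _ = ∑ j ∈ Finset.range (k + 1), g j + ∑ j ∈ Finset.Ico (k + 1) (2 * (k + 1) - 1), g j :=
        (Finset.sum_range_add_sum_Ico g (by omega)).symm
    _ = (k + 1) * n := by
        rw [hhead, htail]
        zify [hn]
        ring

theorem mul_le_sigma15_iff {m n : ℕ} (hn : 3 ≤ n) (i : Fin (2 * m - 1)) (k : ℕ) :
    k * (n - 1) ≤ sigma15 m n i ↔ k ≤ if i ∈ bigPositions15 m then 1 else 0 := by
  simp only [sigma15, mem_bigPositions15]
  rcases k with _ | _ | k
  · simp
  · split_ifs <;> omega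
  · have : (k + 1 + 1) * (n - 1) = k * (n - 1) + 2 * (n - 1) := by ring
    split_ifs <;> omega

def blocks15 (m n : ℕ) (c : Fin (2 * m - 1) → ℕ) : Fin (2 * m - 1) → Multiset ℕ :=
  fun i => replicate (sigma15 m n i - c i * (n - 1)) 1 + replicate (c i) (n - 1)

theorem isBreaking15_iff {m n : ℕ} (hm : 1 ≤ m) (hn : 3 ≤ n) (b : Fin (2 * m - 1) → Multiset ℕ) :
    IsBreaking (sigma15 m n) (pi15 m n) b ↔
      ∃ c : Fin (2 * m - 1) → ℕ, (∀ i, c i ≤ if i ∈ bigPositions15 m then 1 else 0) ∧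
        ∑ i, c i + 1 = m ∧ b = blocks15 m n c := by
  rw [pi15, isBreaking_replicate_add_replicate_iff _ one_pos (by omega) (by omega)]
  constructor
  · rintro ⟨a, c, hσ, -, hc, rfl⟩
    refine ⟨c, fun i => (mul_le_sigma15_iff hn i _).1 (hσ i ▸ Nat.le_add_left _ _), by omega,
      funext fun i => ?_⟩
    rw [blocks15, ← hσ i]
    simp
  · rintro ⟨c, hle, hc, rfl⟩
    have hσ i : sigma15 m n i - c i * (n - 1) + c i * (n - 1) = sigma15 m n i :=
      Nat.sub_add_cancel ((mul_le_sigma15_iff hn i _).2 (hle i))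
    refine ⟨_, c, fun i => by rw [mul_one, hσ], ?_, by omega, rfl⟩
    have htotal : ∑ i, (sigma15 m n i - c i * (n - 1)) + (∑ i, c i) * (n - 1) = m * n := by
      rw [Finset.sum_mul, ← Finset.sum_add_distrib, Finset.sum_congr rfl fun i _ => hσ i,
        sum_sigma15 hm (by omega)]
    have : (m - 1) * (n - 1) + (m + n - 1) = m * n := by
      zify [hm, (by omega : 1 ≤ n), (by omega : 1 ≤ m + n)]
      ring
    rw [show ∑ i, c i = m - 1 by omega] at htotal
    omega

def breaking15 (m n : ℕ) (j : Fin (2 * m - 1)) : Fin (2 * m - 1) → Multiset ℕ :=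
  blocks15 m n fun i => if i ∈ (bigPositions15 m).erase j then 1 else 0

theorem isBreaking15_iff_exists {m n : ℕ} (hm : 1 ≤ m) (hn : 3 ≤ n)
    (b : Fin (2 * m - 1) → Multiset ℕ) :
    IsBreaking (sigma15 m n) (pi15 m n) b ↔ ∃ j ∈ bigPositions15 m, b = breaking15 m n j := by
  rw [isBreaking15_iff hm hn]
  constructor
  · rintro ⟨c, hle, hc, rfl⟩
    obtain ⟨j, hj, rfl⟩ := (Finset.exists_mem_eq_indicator_erase_iff _ c).1
      ⟨hle, hc.trans (card_bigPositions15 m).symm⟩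
    exact ⟨j, hj, rfl⟩
  · rintro ⟨j, hj, rfl⟩
    obtain ⟨hle, hc⟩ := (Finset.exists_mem_eq_indicator_erase_iff _ _).2 ⟨j, hj, rfl⟩
    exact ⟨_, hle, hc.trans (card_bigPositions15 m), rfl⟩

theorem breaking15_of_val_eq_zero {m n : ℕ} {j : Fin (2 * m - 1)} (hj : (j : ℕ) = 0) :
    breaking15 m n j = bA15 m n := by
  funext i
  simp only [breaking15, blocks15, bA15, sigma15, Finset.mem_erase, mem_bigPositions15]
  split_ifs <;> first | omega | simp

theorem breaking15_of_val_ne_zero {m n : ℕ} (hn : 1 ≤ n) {j : Fin (2 * m - 1)}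
    (hj0 : (j : ℕ) ≠ 0) (hjm : (j : ℕ) < m) : breaking15 m n j = bB15 m n j := by
  funext i
  simp only [breaking15, blocks15, bB15, sigma15, Finset.mem_erase, mem_bigPositions15]
  split_ifs <;> first | omega | (simp [Nat.sub_sub_self hn]; exact pair_comm _ _) | simp

theorem injOn_breaking15 {m n : ℕ} (hn : 3 ≤ n) :
    Set.InjOn (breaking15 m n) (bigPositions15 m) := by
  intro j hj j' _ h
  by_contra hne
  have := congrArg (count (n - 1)) (congrFun h j)
  simp only [breaking15, blocks15, count_replicate_add_replicate_right (show 1 ≠ n - 1 by omega),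
    Finset.mem_erase] at this
  simp [hne, Finset.mem_coe.1 hj] at this

/-- For π = (1^{m+n−1} (n−1)^{m−1}) and σ = (n, (n−1)^{m−1}, 1^{m−1}) there are
exactly m breakings of π according to σ: either n breaks as 1+⋯+1 and the rest
trivially, or n breaks as {n−1, 1}, one of the m−1 parts n−1 breaks as a sum
of 1's, and the rest break trivially. -/
theorem m_breakings (m n : ℕ) (hm : 1 ≤ m) (hn : 3 ≤ n) :
    {b : Fin (2 * m - 1) → Multiset ℕ | IsBreaking (sigma15 m n) (pi15 m n) b}.ncard = m ∧
      ∀ b : Fin (2 * m - 1) → Multiset ℕ,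
        IsBreaking (sigma15 m n) (pi15 m n) b ↔
          (b = bA15 m n ∨
            ∃ j : Fin (2 * m - 1), 1 ≤ (j : ℕ) ∧ (j : ℕ) ≤ m - 1 ∧ b = bB15 m n j) := by
  have hbreakings : {b | IsBreaking (sigma15 m n) (pi15 m n) b} =
      breaking15 m n '' bigPositions15 m := by
    ext b
    simp [isBreaking15_iff_exists hm hn, eq_comm]
  refine ⟨?_, fun b => ?_⟩
  · rw [hbreakings, (injOn_breaking15 hn).ncard_image, Set.ncard_coe_finset,
      card_bigPositions15]
  rw [isBreaking15_iff_exists hm hn]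
  constructor
  · rintro ⟨j, hj, rfl⟩
    rw [mem_bigPositions15] at hj
    by_cases hj0 : (j : ℕ) = 0
    · exact .inl (breaking15_of_val_eq_zero hj0)
    · exact .inr ⟨j, by omega, by omega, breaking15_of_val_ne_zero (by omega) hj0 hj⟩
  · rintro (rfl | ⟨j, hj1, hj2, rfl⟩)
    · exact ⟨⟨0, by omega⟩, mem_bigPositions15.2 hm, (breaking15_of_val_eq_zero rfl).symm⟩
    · exact ⟨j, mem_bigPositions15.2 (by omega),
        (breaking15_of_val_ne_zero (by omega) (by omega) (by omega)).symm⟩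
end
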